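/- arXiv:1506.04054 — 7 statements merged into one kernel-verified Lean document; each statement's English description precedes it below -/
import Mathlib

section
/- Let (G,σ) be a signed simple graph having a unique Sachs subgraph. If G has a perfect matching M, then det(A) = (−1)^{|M|}, where A is the adjacency matrix of (G,σ). In particular, A is invertible. -/
open scoped Classical

/-- Degree of a vertex in a simple graph (as a cardinality, avoiding decidability). -/
noncomputable def sachsDeg {n : ℕ} (H : SimpleGraph (Fin n)) (v : Fin n) : ℕ :=
  Nat.card {w // H.Adj v w}

/-- `H` is a Sachs subgraph of the simple graph `G`: a spanning subgraph all of whose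
components are `K₂`'s or cycles; equivalently every vertex has degree `1` or `2` in `H`
and no edge of `H` joins a degree-`1` vertex to a degree-`2` vertex. -/
def IsSachsSubgraph {n : ℕ} (G H : SimpleGraph (Fin n)) : Prop :=
  H ≤ G ∧ (∀ v, sachsDeg H v = 1 ∨ sachsDeg H v = 2) ∧
    ∀ u v, H.Adj u v → ¬(sachsDeg H u = 1 ∧ sachsDeg H v = 2)

/-- `M` is a perfect matching of `G`, viewed as a spanning subgraph of `K₂` components. -/
def IsPerfectMatchingSub {n : ℕ} (G M : SimpleGraph (Fin n)) : Prop :=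
  M ≤ G ∧ ∀ v, sachsDeg M v = 1

/-!
In the permutation expansion of `det A`, a permutation `π` contributes only if every `i` is
adjacent to `π i`; the edges `{i, π i}` then form a Sachs subgraph (the 2-cycles of `π` give
`K₂`'s, its longer cycles give cycles). By uniqueness this subgraph is `M`, so the only
contributing permutation is the involution `π₀` exchanging the ends of each edge of `M`. In its
term `sign π₀ · ∏ᵢ σ(π₀ i, i)` the factors pair up as `σ(i, j) σ(j, i) = σ(i, j)² = 1`, and
`sign π₀ = (-1)^|M|` because `π₀` is a product of `|M|` disjoint transpositions.
-/

open Equiv Finset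

theorem Matrix.det_eq_sign_mul_prod_of_unique_perm {ι R : Type*} [Fintype ι] [DecidableEq ι]
    [CommRing R] (A : Matrix ι ι R) (π₀ : Perm ι)
    (h : ∀ π : Perm ι, (∀ i, A (π i) i ≠ 0) → π = π₀) :
    A.det = ((Perm.sign π₀ : ℤ) : R) * ∏ i, A (π₀ i) i := by
  rw [Matrix.det_apply']
  refine sum_eq_single_of_mem π₀ (mem_univ _) fun π _ hπ => ?_
  obtain ⟨i, hi⟩ : ∃ i, A (π i) i = 0 := by
    by_contra! hne
    exact hπ (h π hne)
  rw [prod_eq_zero (f := fun i => A (π i) i) (mem_univ i) hi, mul_zero]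

theorem Equiv.Perm.sign_of_involutive_of_forall_ne {α : Type*} [Fintype α] [DecidableEq α]
    {π : Perm α} (hinv : Function.Involutive π) (hfree : ∀ x, π x ≠ x) :
    Perm.sign π = (-1) ^ (Fintype.card α / 2) := by
  have hsq : π ^ 2 = 1 := Equiv.ext hinv
  have : IsEmpty (Function.fixedPoints π) := ⟨fun x => hfree x x.2⟩
  rw [Perm.sign_of_pow_two_eq_one hsq, Fintype.card_eq_zero (α := Function.fixedPoints π),
    Nat.sub_zero]

def permGraph {α : Type*} (π : Perm α) : SimpleGraph α :=
  SimpleGraph.fromRel fun u v => π u = v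

theorem permGraph_adj {α : Type*} (π : Perm α) (u v : α) :
    (permGraph π).Adj u v ↔ u ≠ v ∧ (π u = v ∨ π v = u) :=
  SimpleGraph.fromRel_adj _ u v

section Sachs

variable {n : ℕ}

theorem sachsDeg_permGraph {π : Perm (Fin n)} (hfree : ∀ i, π i ≠ i) (v : Fin n) :
    sachsDeg (permGraph π) v = if π (π v) = v then 1 else 2 := by
  have hnbr : {w | (permGraph π).Adj v w} = {π v, π.symm v} := by
    ext w
    simp only [Set.mem_ofPred_eq, permGraph_adj, Set.mem_insert_iff, Set.mem_singleton_iff,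
      Equiv.eq_symm_apply]
    constructor
    · rintro ⟨-, h | h⟩
      exacts [Or.inl h.symm, Or.inr h]
    · rintro (rfl | rfl)
      · exact ⟨(hfree v).symm, Or.inl rfl⟩
      · exact ⟨hfree w, Or.inr rfl⟩
  change Nat.card ({w | (permGraph π).Adj v w} : Set _) = _
  rw [hnbr, Nat.card_coe_set_eq]
  split_ifs with h
  · rw [show π.symm v = π v from π.symm_apply_eq.mpr h.symm, Set.pair_eq_singleton,
      Set.ncard_singleton]
  · exact Set.ncard_pair fun he => h (by rw [he, Equiv.apply_symm_apply])

theorem isSachsSubgraph_permGraph {G : SimpleGraph (Fin n)} {π : Perm (Fin n)}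
    (hG : ∀ i, G.Adj i (π i)) : IsSachsSubgraph G (permGraph π) := by
  have hfree : ∀ i, π i ≠ i := fun i => (hG i).ne'
  refine ⟨?_, fun v => ?_, fun u v huv hdeg => ?_⟩
  · rintro u v ⟨-, rfl | rfl⟩
    exacts [hG u, (hG v).symm]
  · rw [sachsDeg_permGraph hfree]
    split_ifs <;> simp
  · simp only [sachsDeg_permGraph hfree, ite_eq_left_iff, ite_eq_right_iff] at hdeg
    have hu : π (π u) = u := by
      by_contra h
      exact absurd (hdeg.1 h) (by norm_num)
    have hv : π (π v) ≠ v := fun h => absurd (hdeg.2 h) (by norm_num)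
    -- `u` lies on a 2-cycle of `π`, hence so does its neighbour `v ∈ {π u, π⁻¹ u}`
    obtain ⟨-, rfl | h⟩ := (permGraph_adj π u v).1 huv
    · exact hv (by rw [hu])
    · obtain rfl : v = π u := π.injective (h.trans hu.symm)
      exact hv (by rw [hu])

theorem IsPerfectMatchingSub.isSachsSubgraph {G M : SimpleGraph (Fin n)}
    (hM : IsPerfectMatchingSub G M) : IsSachsSubgraph G M :=
  ⟨hM.1, fun v => Or.inl (hM.2 v), fun u v _ h => absurd (hM.2 v ▸ h.2) (by norm_num)⟩

theorem exists_perm_adj_iff_of_sachsDeg_eq_one {M : SimpleGraph (Fin n)}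
    (hM : ∀ v, sachsDeg M v = 1) : ∃ π : Perm (Fin n), ∀ i j, M.Adj i j ↔ π i = j := by
  have hpartner : ∀ v, ∃ w, ∀ u, M.Adj v u ↔ w = u := fun v => by
    obtain ⟨⟨w, hw⟩, huniq⟩ := Nat.card_eq_one_iff_exists.mp (hM v)
    exact ⟨w, fun u => ⟨fun hu => congrArg Subtype.val (huniq ⟨u, hu⟩).symm, (· ▸ hw)⟩⟩
  choose f hf using hpartner
  have hinv : Function.Involutive f := fun v => ((hf (f v) v).1 ((hf v (f v)).2 rfl).symm)
  exact ⟨hinv.toPerm f, hf⟩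

theorem two_mul_card_edgeSet_of_sachsDeg_eq_one {M : SimpleGraph (Fin n)}
    (hM : ∀ v, sachsDeg M v = 1) : 2 * Nat.card M.edgeSet = n := by
  classical
  have hdeg : ∀ v, M.degree v = 1 := fun v => by
    rw [← hM v, sachsDeg, Nat.card_eq_fintype_card, ← M.card_neighborSet_eq_degree]
    rfl
  have hsum := M.sum_degrees_eq_twice_card_edges
  simp only [hdeg, sum_const, card_univ, Fintype.card_fin, smul_eq_mul, mul_one] at hsum
  rw [Nat.card_eq_fintype_card, ← M.edgeFinset_card, hsum.symm]

theorem perm_eq_of_forall_adj_of_unique_sachs {G M : SimpleGraph (Fin n)}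
    (huniq : ∀ S, IsSachsSubgraph G S → S = M) {π₀ : Perm (Fin n)}
    (hπ₀ : ∀ i j, M.Adj i j ↔ π₀ i = j) {π : Perm (Fin n)} (hG : ∀ i, G.Adj i (π i)) :
    π = π₀ := by
  have hM : permGraph π = M := huniq _ (isSachsSubgraph_permGraph hG)
  ext i
  have hadj : M.Adj i (π i) := hM ▸ (permGraph_adj π _ _).2 ⟨(hG i).ne, Or.inl rfl⟩
  rw [(hπ₀ i (π i)).1 hadj]

end Sachs

/-- If a signed simple graph `(G,σ)` has a unique Sachs subgraph and `G`
has a perfect matching `M`, then `det A = (−1)^{|M|}`; in particular `A` is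
invertible. -/
theorem det_of_signed_graph_with_unique_sachs
    {n : ℕ} (G : SimpleGraph (Fin n))
    (σ : Fin n → Fin n → ℝ) (hσsymm : ∀ i j, σ i j = σ j i)
    (hσval : ∀ i j, G.Adj i j → σ i j = 1 ∨ σ i j = -1)
    (A : Matrix (Fin n) (Fin n) ℝ)
    (hAdef : A = Matrix.of fun i j => if G.Adj i j then σ i j else 0)
    (hunique : ∃! S : SimpleGraph (Fin n), IsSachsSubgraph G S)
    (M : SimpleGraph (Fin n)) (hM : IsPerfectMatchingSub G M) :
    A.det = (-1) ^ (Nat.card M.edgeSet) ∧ IsUnit A.det := by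
  obtain ⟨S, -, hS⟩ := hunique
  have huniq : ∀ H, IsSachsSubgraph G H → H = M :=
    fun H hH => (hS H hH).trans (hS M hM.isSachsSubgraph).symm
  obtain ⟨π₀, hπ₀⟩ := exists_perm_adj_iff_of_sachsDeg_eq_one hM.2
  have hG : ∀ i, G.Adj i (π₀ i) := fun i => hM.1 ((hπ₀ i _).2 rfl)
  have hinv : Function.Involutive π₀ := fun i => (hπ₀ _ _).1 ((hπ₀ i _).2 rfl).symm
  have hA : ∀ i j, A i j = if G.Adj i j then σ i j else 0 := by simp [hAdef]
  have hsupport : ∀ π : Perm (Fin n), (∀ i, A (π i) i ≠ 0) → π = π₀ := fun π hπ =>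
    perm_eq_of_forall_adj_of_unique_sachs huniq hπ₀ fun i => by
      by_contra h
      exact hπ i (by rw [hA, if_neg fun h' => h h'.symm])
  have hprod : ∏ i, A (π₀ i) i = 1 := by
    refine prod_ninvolution π₀ (fun i => ?_) (fun i _ => (hG i).ne') (fun _ => mem_univ _) hinv
    rw [hinv, hA, hA, if_pos (hG i).symm, if_pos (hG i), hσsymm i]
    rcases hσval _ _ (hG i).symm with h | h <;> norm_num [h]
  have hcard : n / 2 = Nat.card M.edgeSet := by
    have := two_mul_card_edgeSet_of_sachsDeg_eq_one hM.2
    omega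
  have hdet : A.det = (-1) ^ Nat.card M.edgeSet := by
    rw [A.det_eq_sign_mul_prod_of_unique_perm π₀ hsupport, hprod,
      Perm.sign_of_involutive_of_forall_ne hinv fun i => (hG i).ne', Fintype.card_fin, hcard]
    push_cast
    ring
  exact ⟨hdet, hdet ▸ isUnit_one.neg.pow _⟩
end

section
/- Every invertible weighted simple bipartite graph is simply invertible: if (G,w) is a simple bipartite weighted graph with det(A) ≠ 0, then all diagonal entries of A⁻¹ are zero. -/
open scoped Classical

/-- Every invertible weighted simple bipartite graph is simply invertible:
if `(G,w)` is a simple bipartite weighted graph whose adjacency matrix `A` has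
`det A ≠ 0`, then all diagonal entries of `A⁻¹` are zero. -/
theorem invertible_weighted_bipartite_is_simply_invertible
    {n : ℕ} (G : SimpleGraph (Fin n)) (c : Fin n → Bool)
    (hc : ∀ i j, G.Adj i j → c i ≠ c j)
    (w : Fin n → Fin n → ℝ) (hw : ∀ i j, w i j = w j i)
    (hw0 : ∀ i j, G.Adj i j → w i j ≠ 0)
    (A : Matrix (Fin n) (Fin n) ℝ)
    (hAdef : A = Matrix.of fun i j => if G.Adj i j then w i j else 0)
    (hdet : A.det ≠ 0) :
    ∀ i, A⁻¹ i i = 0 := by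
  intro i
  set s : Fin n → ℝ := fun i => if c i then 1 else -1 with hs
  have hs2 : ∀ j, s j * s j = 1 := by
    intro j; simp only [hs]; by_cases h : c j <;> simp [h]
  set S : Matrix (Fin n) (Fin n) ℝ := Matrix.diagonal s with hS
  have hSS : S * S = 1 := by
    rw [hS, Matrix.diagonal_mul_diagonal]
    ext j k
    by_cases h : j = k <;> simp [Matrix.diagonal_apply, Matrix.one_apply, h, hs2]
  have hSAS : S * A * S = -A := by
    ext j k
    rw [hS]
    simp only [Matrix.mul_diagonal, Matrix.diagonal_mul, Matrix.neg_apply]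
    rw [hAdef]
    simp only [Matrix.of_apply]
    by_cases h : G.Adj j k
    · simp only [h, if_pos]
      have hcc := hc j k h
      simp only [hs]
      cases hcj : c j <;> cases hck : c k <;> simp_all <;> ring
    · simp [h]
  have hAS : A * S = -(S * A) := by
    calc A * S = (S * S) * A * S := by rw [hSS, one_mul]
    _ = S * (S * A * S) := by rw [Matrix.mul_assoc, Matrix.mul_assoc, Matrix.mul_assoc S A S]
    _ = S * (-A) := by rw [hSAS]
    _ = -(S * A) := by rw [Matrix.mul_neg]
  have hA1 : A * A⁻¹ = 1 := Matrix.mul_nonsing_inv A (isUnit_iff_ne_zero.mpr hdet)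
  have hinv : A⁻¹ = -(S * A⁻¹ * S) := by
    apply Matrix.inv_eq_right_inv
    calc A * -(S * A⁻¹ * S) = -((A * S) * A⁻¹ * S) := by
          rw [Matrix.mul_neg, Matrix.mul_assoc, Matrix.mul_assoc, Matrix.mul_assoc]
    _ = -(-(S * A) * A⁻¹ * S) := by rw [hAS]
    _ = S * (A * A⁻¹) * S := by
          rw [Matrix.neg_mul, Matrix.neg_mul, neg_neg, Matrix.mul_assoc, Matrix.mul_assoc,
            Matrix.mul_assoc, Matrix.mul_assoc A A⁻¹ S]
    _ = 1 := by rw [hA1, Matrix.mul_one, hSS]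
  have : A⁻¹ i i = -(s i * A⁻¹ i i * s i) := by
    conv_lhs => rw [hinv]
    rw [hS]
    simp [Matrix.mul_diagonal, Matrix.diagonal_mul]
  have h2 : A⁻¹ i i = -(A⁻¹ i i) := by
    calc A⁻¹ i i = -(s i * A⁻¹ i i * s i) := this
    _ = -(A⁻¹ i i * (s i * s i)) := by ring_nf
    _ = -(A⁻¹ i i) := by rw [hs2, mul_one]
  linarith
end

section
/- A bipartite graph with a unique perfect matching has a pendant edge (a vertex of degree 1). -/
/-!
Let `m` be the partner map of the perfect matching and suppose no vertex has degree one. Then every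
vertex `v` has a neighbour `g v ≠ m v`, and by bipartiteness `m ∘ g` maps each colour class into
itself. On its periodic points, which exist by finiteness, `m ∘ g` restricts to a permutation `σ`
moving some vertex of the colour class `true`. Re-matching every such vertex `v` with `m (σ v)`
flips the `m`-alternating cycles traced by `σ` and gives a second perfect matching.
-/

open scoped Classical

open Function Set Equiv SimpleGraph

theorem Set.MapsTo.exists_mem_periodicPts {α : Type*} [Finite α] {f : α → α} {s : Set α}
    (hf : MapsTo f s s) (hs : s.Nonempty) : ∃ x ∈ s, x ∈ periodicPts f := by
  obtain ⟨x, hx⟩ := hs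
  obtain ⟨a, b, hab, heq⟩ := Finite.exists_ne_map_eq_of_infinite fun k : ℕ => f^[k] x
  wlog hlt : a < b generalizing a b
  · exact this b a hab.symm heq.symm (by omega)
  refine ⟨f^[a] x, hf.iterate a hx, mk_mem_periodicPts (Nat.sub_pos_of_lt hlt) ?_⟩
  change f^[b - a] (f^[a] x) = f^[a] x
  rw [← iterate_add_apply, Nat.sub_add_cancel hlt.le, ← heq]

theorem Function.exists_perm_eqOn_periodicPts {α : Type*} (f : α → α) :
    ∃ σ : Perm α, EqOn σ f (periodicPts f) ∧ ∀ x, σ x = x ∨ σ x = f x := by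
  classical
  set σ := Perm.ofSubtype ((bijOn_periodicPts f).equiv _)
  have hσ : EqOn σ f (periodicPts f) := fun x hx => by
    rw [Perm.ofSubtype_apply_of_mem _ hx]
    rfl
  refine ⟨σ, hσ, fun x => ?_⟩
  by_cases hx : x ∈ periodicPts f
  · exact Or.inr (hσ hx)
  · exact Or.inl (Perm.ofSubtype_apply_of_not_mem _ hx)

section Rematch

variable {V : Type*} {G : SimpleGraph V} {c : V → Bool} {m : V → V} {σ : Perm V}

def rematch (c : V → Bool) (m : V → V) (σ : Perm V) (v : V) : V :=
  if c v then m (σ v) else σ.symm (m v)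

theorem rematch_involutive (hm : Involutive m) (hcm : ∀ v, c (m v) = !c v)
    (hσ : ∀ v, c (σ v) = c v) : Involutive (rematch c m σ) := by
  have hσsymm : ∀ v, c (σ.symm v) = c v := fun v => by simpa using (hσ (σ.symm v)).symm
  intro v
  cases hv : c v <;> simp [rematch, hv, hcm, hσ, hσsymm, hm _]

theorem adj_rematch (hm : Involutive m) (hcm : ∀ v, c (m v) = !c v) (hσ : ∀ v, c (σ v) = c v)
    (hadj : ∀ v, c v → G.Adj v (m (σ v))) (v : V) : G.Adj v (rematch c m σ v) := by
  cases hv : c v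
  · have hu : c (σ.symm (m v)) = true := by simp [← hσ (σ.symm (m v)), hcm, hv]
    simpa [rematch, hv, hm v] using (hadj _ hu).symm
  · simpa [rematch, hv] using hadj v hv

theorem exists_involutive_ne_of_forall_exists_adj_ne [Finite V] [Nonempty V]
    (hc : ∀ v w, G.Adj v w → c v ≠ c w) (hm : Involutive m) (hmG : ∀ v, G.Adj v (m v))
    (hdeg : ∀ v, ∃ w, G.Adj v w ∧ w ≠ m v) :
    ∃ p : V → V, Involutive p ∧ (∀ v, G.Adj v (p v)) ∧ p ≠ m := by
  choose g hgG hgm using hdeg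
  have hcm : ∀ v, c (m v) = !c v := fun v => Bool.eq_not.mpr (hc _ _ (hmG v)).symm
  have hcf : ∀ v, c (m (g v)) = c v := fun v => by
    rw [hcm, Bool.eq_not.mpr (hc _ _ (hgG v)).symm, Bool.not_not]
  have hs : {v | c v = true}.Nonempty := by
    obtain ⟨v⟩ := ‹Nonempty V›
    cases hv : c v
    · exact ⟨m v, by simp [hcm, hv]⟩
    · exact ⟨v, hv⟩
  obtain ⟨x, hx : c x = true, hxper⟩ := MapsTo.exists_mem_periodicPts (f := m ∘ g)
    (fun v (hv : c v = true) => (hcf v).trans hv) hs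
  obtain ⟨σ, hσf, hσ⟩ := exists_perm_eqOn_periodicPts (m ∘ g)
  have hσc : ∀ v, c (σ v) = c v := fun v => by
    rcases hσ v with h | h <;> rw [h]
    exact hcf v
  refine ⟨rematch c m σ, rematch_involutive hm hcm hσc, adj_rematch hm hcm hσc ?_, fun h => ?_⟩
  · intro v _
    rcases hσ v with h | h <;> rw [h]
    · exact hmG v
    · rw [comp_apply, hm]
      exact hgG v
  · have := congrFun h x
    rw [rematch, if_pos hx, hσf hxper, comp_apply, hm] at this
    exact hgm x this

end Rematch

section SachsDeg

variable {n : ℕ} {G M : SimpleGraph (Fin n)}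

theorem sachsDeg_eq_one_iff {v : Fin n} : sachsDeg G v = 1 ↔ ∃! w, G.Adj v w := by
  rw [sachsDeg, Nat.card_eq_one_iff_exists]
  constructor
  · rintro ⟨⟨w, hw⟩, h⟩
    exact ⟨w, hw, fun y hy => congrArg Subtype.val (h ⟨y, hy⟩)⟩
  · rintro ⟨w, hw, h⟩
    exact ⟨⟨w, hw⟩, fun y => Subtype.ext (h y.1 y.2)⟩

theorem exists_adj_ne_of_sachsDeg_ne_one {v w : Fin n} (hdeg : sachsDeg G v ≠ 1)
    (hw : G.Adj v w) : ∃ u, G.Adj v u ∧ u ≠ w := by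
  by_contra! h
  exact hdeg (sachsDeg_eq_one_iff.mpr ⟨w, hw, h⟩)

theorem IsPerfectMatchingSub.exists_partner (hM : IsPerfectMatchingSub G M) :
    ∃ m : Fin n → Fin n, Involutive m ∧ (∀ v, G.Adj v (m v)) ∧ ∀ v w, M.Adj v w ↔ m v = w := by
  choose m hmM hmuniq using fun v => sachsDeg_eq_one_iff.mp (hM.2 v)
  have hMm : ∀ v w, M.Adj v w ↔ m v = w := fun v w => ⟨fun h => (hmuniq v w h).symm, by grind⟩
  exact ⟨m, fun v => (hMm _ _).mp (hmM v).symm, fun v => hM.1 (hmM v), hMm⟩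

theorem isPerfectMatchingSub_fromRel {p : Fin n → Fin n} (hp : Involutive p)
    (hpG : ∀ v, G.Adj v (p v)) : IsPerfectMatchingSub G (fromRel fun v w => p v = w) := by
  have hadj : ∀ v w, (fromRel fun v w => p v = w).Adj v w ↔ p v = w := by
    intro v w
    simp only [fromRel_adj]
    constructor
    · rintro ⟨-, h | h⟩
      · exact h
      · rw [← h, hp]
    · rintro rfl
      exact ⟨(hpG v).ne, Or.inl rfl⟩
  refine ⟨fun v w h => (hadj v w).mp h ▸ hpG v, fun v => sachsDeg_eq_one_iff.mpr ?_⟩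
  exact ⟨p v, (hadj v _).mpr rfl, fun w h => ((hadj v w).mp h).symm⟩

end SachsDeg

/-- A (nonempty) bipartite graph with a unique perfect matching has a
pendant edge, i.e. a vertex of degree `1`. -/
theorem bipartite_unique_perfect_matching_has_pendant
    {n : ℕ} (hn : 0 < n) (G : SimpleGraph (Fin n))
    (c : Fin n → Bool) (hc : ∀ i j, G.Adj i j → c i ≠ c j)
    (huniq : ∃! M : SimpleGraph (Fin n), IsPerfectMatchingSub G M) :
    ∃ v, sachsDeg G v = 1 := by
  obtain ⟨M, hM, hMuniq⟩ := huniq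
  obtain ⟨m, hm, hmG, hMm⟩ := hM.exists_partner
  by_contra! hdeg
  have : Nonempty (Fin n) := ⟨⟨0, hn⟩⟩
  obtain ⟨p, hp, hpG, hpm⟩ := exists_involutive_ne_of_forall_exists_adj_ne hc hm hmG
    fun v => exists_adj_ne_of_sachsDeg_ne_one (hdeg v) (hmG v)
  have hpM := hMuniq _ (isPerfectMatchingSub_fromRel hp hpG)
  have hMp : ∀ v, M.Adj v (p v) := fun v => hpM ▸ ⟨(hpG v).ne, Or.inl rfl⟩
  exact hpm (funext fun v => ((hMm v (p v)).mp (hMp v)).symm)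
end

section
/- If a simple graph G has a unique Sachs subgraph S and S is not a perfect matching (i.e., S contains a cycle), then there exists a vertex i of G such that the diagonal entry (A⁻¹)_{ii} of the inverse adjacency matrix of any signing (G,σ) has absolute value 1/2; in particular, the inverse of (G,σ) is neither integral nor simple. -/
open scoped Classical

/-!
Fix a permutation `π` moving every vertex to a `G`-neighbour (Hall's theorem provides one inside
`S`). The graph of its orbits is a Sachs subgraph, hence equal to `S`: the `S`-neighbours of `x`
are `π x` and `π⁻¹ x`. So every nonzero term of the Leibniz expansion of `det A` comes from `π`
with some cycles reversed, which does not change the term of a symmetric matrix; thus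
`det A ≠ 0`, and for an edge `uv` on a cycle of `S`, inversion of permutations shows that half of
`det A` comes from permutations sending `u` to `v`, i.e. `A⁻¹ u v * A v u = 1 / 2`. The principal
minor of `A` off `{u, v}` vanishes, since a nonzero term would give a Sachs subgraph in which
`uv` is a `K₂`, so by Jacobi's identity `A⁻¹ u u * A⁻¹ v v = A⁻¹ u v * A⁻¹ v u = 1 / 4`. The
cycles of `S` are odd (an even one could be traded for a perfect matching), and going once
around the cycle through `i` gives `(A⁻¹ i i) ^ 2 = 1 / 4`.
-/

open Equiv Finset

namespace Equiv.Perm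

variable {α : Type*} (π : Perm α) {p : α → Prop} [DecidablePred p]

/-- `π` run backwards on `p` and forwards off `p`. -/
def reverseOn (h : ∀ x, p ((π ^ 2) x) ↔ p x) : Perm α :=
  π * (ofSubtype ((π ^ 2).subtypePerm h))⁻¹

variable {π}

theorem reverseOn_apply_of_pos (h : ∀ x, p ((π ^ 2) x) ↔ p x) {x : α} (hx : p x) :
    π.reverseOn h x = π⁻¹ x := by
  rw [reverseOn, mul_apply, ← map_inv, inv_subtypePerm, ofSubtype_subtypePerm_of_mem _ hx]
  simp [sq]

theorem reverseOn_apply_of_neg (h : ∀ x, p ((π ^ 2) x) ↔ p x) {x : α} (hx : ¬p x) :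
    π.reverseOn h x = π x := by
  rw [reverseOn, mul_apply, ← map_inv, ofSubtype_apply_of_not_mem _ hx]

theorem sign_reverseOn [Fintype α] [DecidableEq α] (h : ∀ x, p ((π ^ 2) x) ↔ p x)
    (hπ : ∀ x, p (π x) ↔ p x) : sign (π.reverseOn h) = sign π := by
  rw [reverseOn, sign_mul, sign_inv, sign_ofSubtype, ← subtypePerm_pow π 2 hπ, map_pow,
    Int.units_sq, mul_one]

theorem exists_perm_apply_apply_eq_of_even_minimalPeriod {x : α}
    (h : Even (Function.minimalPeriod π x)) :
    ∃ ρ : Perm α, ρ (ρ x) = x ∧ ∀ y, ρ y = π y ∨ ρ y = π⁻¹ y := by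
  -- `ρ` reverses `π` on the odd positions of the cycle of `x`, pairing `π ^ (2 * k) x` with
  -- `π ^ (2 * k + 1) x`; this is consistent because the cycle has even length.
  set p : α → Prop := fun y => ∃ k : ℤ, (π ^ (2 * k + 1)) x = y
  have hp : ∀ y, p ((π ^ 2) y) ↔ p y := by
    refine fun y => ⟨fun ⟨k, hk⟩ => ⟨k - 1, ?_⟩, fun ⟨k, hk⟩ => ⟨k + 1, ?_⟩⟩
    · rw [show 2 * (k - 1) + 1 = -2 + (2 * k + 1) by ring, zpow_add, mul_apply, hk]
      simp
    · rw [show 2 * (k + 1) + 1 = 2 + (2 * k + 1) by ring, zpow_add, mul_apply, hk]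
      simp
  have hx : ¬p x := by
    rintro ⟨k, hk⟩
    have hdvd : (Function.minimalPeriod π x : ℤ) ∣ 2 * k + 1 :=
      MulAction.zpow_smul_eq_iff_minimalPeriod_dvd.1 (show π ^ (2 * k + 1) • x = x from hk)
    obtain ⟨m, hm⟩ := h
    have h2 : (2 : ℤ) ∣ 2 * k + 1 := dvd_trans ⟨m, by rw [hm]; push_cast; ring⟩ hdvd
    omega
  refine ⟨π.reverseOn hp, ?_, fun y => ?_⟩
  · rw [reverseOn_apply_of_neg hp hx, reverseOn_apply_of_pos hp ⟨0, by simp⟩]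
    simp
  · by_cases hy : p y
    · exact Or.inr (reverseOn_apply_of_pos hp hy)
    · exact Or.inl (reverseOn_apply_of_neg hp hy)

def toSimpleGraph (π : Perm α) : SimpleGraph α :=
  SimpleGraph.fromRel fun x y => π x = y

theorem neighborSet_toSimpleGraph {π : Perm α} (hπ : ∀ x, π x ≠ x) (x : α) :
    π.toSimpleGraph.neighborSet x = {π x, π⁻¹ x} := by
  ext y
  simp only [SimpleGraph.mem_neighborSet, toSimpleGraph, SimpleGraph.fromRel_adj,
    Set.mem_insert_iff, Set.mem_singleton_iff, eq_inv_iff_eq]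
  constructor
  · rintro ⟨-, h | h⟩
    exacts [Or.inl h.symm, Or.inr h]
  · rintro (rfl | h)
    exacts [⟨(hπ x).symm, Or.inl rfl⟩, ⟨fun hxy => hπ y (hxy ▸ h), Or.inr h⟩]

end Equiv.Perm

theorem Function.sq_eq_of_forall_mul_iterate_eq {α M : Type*} [CommMonoidWithZero M]
    [IsCancelMulZero M] {f : α → α} {g : α → M} {x : α} {c : M} (hc : c ≠ 0)
    (h : ∀ k, g (f^[k] x) * g (f^[k + 1] x) = c) (hodd : Odd (minimalPeriod f x)) :
    g x ^ 2 = c := by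
  have hstep : ∀ k, g (f^[k + 2] x) = g (f^[k] x) := fun k =>
    mul_left_cancel₀ (right_ne_zero_of_mul ((h k).symm ▸ hc)) (by rw [h (k + 1), mul_comm, h k])
  have heven : ∀ j, g (f^[2 * j] x) = g x := by
    intro j
    induction j with
    | zero => rfl
    | succ j ih => rw [mul_add_one, hstep, ih]
  obtain ⟨j, hj⟩ := hodd
  have hfx : g (f x) = g x := by
    rw [← heven (j + 1), show 2 * (j + 1) = 1 + minimalPeriod f x by omega,
      iterate_add_apply, iterate_minimalPeriod, iterate_one]
  rw [sq, ← hfx, ← h 0, iterate_zero_apply, zero_add, iterate_one, hfx]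

namespace SimpleGraph

variable {α : Type*} [Fintype α] [DecidableEq α]

noncomputable def adjPerms (G : SimpleGraph α) : Finset (Perm α) :=
  {π | ∀ x, G.Adj x (π x)}

theorem mem_adjPerms {G : SimpleGraph α} {π : Perm α} :
    π ∈ G.adjPerms ↔ ∀ x, G.Adj x (π x) := by
  simp [adjPerms]

theorem exists_perm_adj_of_degree_eq (G : SimpleGraph α) [DecidableRel G.Adj]
    (hpos : ∀ v, 0 < G.degree v) (hdeg : ∀ u v, G.Adj u v → G.degree u = G.degree v) :
    ∃ π : Perm α, ∀ v, G.Adj v (π v) := by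
  have hone : ∀ u, ∑ _v ∈ G.neighborFinset u, ((G.degree u : ℚ))⁻¹ = 1 := fun u => by
    rw [sum_const, card_neighborFinset_eq_degree, nsmul_eq_mul,
      mul_inv_cancel₀ (Nat.cast_ne_zero.2 (hpos u).ne')]
  -- Hall's condition, by double counting the edges out of `W` with weight `1 / degree`.
  have hall : ∀ W : Finset α, #W ≤ #(W.biUnion fun v => G.neighborFinset v) := fun W => by
    have : (#W : ℚ) ≤ #(W.biUnion fun v => G.neighborFinset v) := calc
      (#W : ℚ) = ∑ v ∈ W, ∑ u ∈ G.neighborFinset v, ((G.degree u : ℚ))⁻¹ := by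
          rw [card_eq_sum_ones, Nat.cast_sum]
          refine sum_congr rfl fun v _ => ?_
          rw [Nat.cast_one, ← hone v]
          exact sum_congr rfl fun u hu => by rw [hdeg v u ((G.mem_neighborFinset v u).1 hu)]
      _ = ∑ u ∈ W.biUnion fun v => G.neighborFinset v, ∑ v ∈ W ∩ G.neighborFinset u,
          ((G.degree u : ℚ))⁻¹ := sum_comm' fun v u => by
            simp only [mem_inter, mem_biUnion, SimpleGraph.mem_neighborFinset]
            exact ⟨fun h => ⟨⟨h.1, h.2.symm⟩, v, h⟩, fun h => ⟨h.1.1, h.1.2.symm⟩⟩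
      _ ≤ ∑ u ∈ W.biUnion fun v => G.neighborFinset v,
          ∑ v ∈ G.neighborFinset u, ((G.degree u : ℚ))⁻¹ :=
          sum_le_sum fun u _ => sum_le_sum_of_subset_of_nonneg inter_subset_right
            fun _ _ _ => by positivity
      _ = #(W.biUnion fun v => G.neighborFinset v) := by simp only [hone, sum_const, nsmul_one]
    exact_mod_cast this
  obtain ⟨f, hf, hfG⟩ := (all_card_le_biUnion_card_iff_exists_injective _).1 hall
  exact ⟨Equiv.ofBijective f hf.bijective_of_finite,
    fun v => (G.mem_neighborFinset _ _).1 (hfG v)⟩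

end SimpleGraph

namespace Matrix

variable {α R : Type*} [Fintype α] [DecidableEq α] [CommRing R] {A : Matrix α α R}

def detTerm (A : Matrix α α R) (π : Perm α) : R :=
  Perm.sign π • ∏ x, A (π x) x

theorem det_eq_sum_detTerm (A : Matrix α α R) : A.det = ∑ π, A.detTerm π :=
  det_apply A

theorem detTerm_inv (hA : A.IsSymm) (π : Perm α) : A.detTerm π⁻¹ = A.detTerm π := by
  rw [detTerm, detTerm, Perm.sign_inv, ← Equiv.prod_comp π]
  simp [hA.apply]

theorem detTerm_reverseOn (hA : A.IsSymm) {π : Perm α} {p : α → Prop} [DecidablePred p]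
    (h : ∀ x, p ((π ^ 2) x) ↔ p x) (hπ : ∀ x, p (π x) ↔ p x) :
    A.detTerm (π.reverseOn h) = A.detTerm π := by
  rw [detTerm, detTerm, Perm.sign_reverseOn h hπ, ← Fintype.prod_subtype_mul_prod_subtype p,
    ← Fintype.prod_subtype_mul_prod_subtype p fun x => A (π x) x]
  congr 2
  · rw [← Equiv.prod_comp (π.subtypePerm hπ)]
    refine Fintype.prod_congr _ _ fun x => ?_
    rw [Perm.subtypePerm_apply, Perm.reverseOn_apply_of_pos h ((hπ x).2 x.2)]
    simp [hA.apply]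
  · exact Fintype.prod_congr _ _ fun x => by rw [Perm.reverseOn_apply_of_neg h x.2]

/-- `π` is `σ` reversed on the set where they differ, which is a union of cycles of `σ`. -/
theorem detTerm_eq_of_pair_eq (hA : A.IsSymm) {π σ : Perm α}
    (h : ∀ x, ({π x, π⁻¹ x} : Set α) = {σ x, σ⁻¹ x}) :
    A.detTerm π = A.detTerm σ := by
  have hrev : ∀ x, π x ≠ σ x → π x = σ⁻¹ x ∧ π⁻¹ x = σ x := fun x hx =>
    (Set.pair_eq_pair_iff.1 (h x)).resolve_left fun h' => hx h'.1
  set p : α → Prop := fun x => π x ≠ σ x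
  have hp : ∀ x, p (σ x) ↔ p x := by
    refine fun x => ⟨fun hσx hx => ?_, fun hx hσx => ?_⟩
    · have h1 : π (σ x) = x := by simpa using (hrev _ hσx).1
      have h2 : π⁻¹ (σ x) = x := by rw [← hx]; simp
      exact hσx (by rw [h1, ← (hrev _ hσx).2, h2])
    · have h1 : π (σ x) = x := by rw [← (hrev x hx).2]; simp
      exact hx (by rw [(hrev x hx).1, Perm.inv_eq_iff_eq, ← hσx, h1])
  have hp2 : ∀ x, p ((σ ^ 2) x) ↔ p x := fun x => by
    rw [sq, Perm.mul_apply, hp, hp]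
  have hπ : π = σ.reverseOn hp2 := by
    ext x
    by_cases hx : p x
    · rw [Perm.reverseOn_apply_of_pos hp2 hx, (hrev x hx).1]
    · rw [Perm.reverseOn_apply_of_neg hp2 hx, not_not.1 hx]
  rw [hπ, detTerm_reverseOn hA hp2 hp]

theorem detTerm_eq_zero_of_not_adj {G : SimpleGraph α} (hG : ∀ i j, ¬G.Adj i j → A i j = 0)
    {π : Perm α} (hπ : ¬∀ x, G.Adj x (π x)) : A.detTerm π = 0 := by
  obtain ⟨x, hx⟩ := not_forall.1 hπ
  rw [detTerm, prod_eq_zero (f := fun y => A (π y) y) (mem_univ x)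
    (hG _ _ fun h => hx h.symm), smul_zero]

theorem det_eq_sum_adjPerms {G : SimpleGraph α} (hG : ∀ i j, ¬G.Adj i j → A i j = 0) :
    A.det = ∑ π ∈ G.adjPerms, A.detTerm π := by
  rw [det_eq_sum_detTerm]
  exact (sum_subset (subset_univ _) fun π _ hπ =>
    detTerm_eq_zero_of_not_adj hG (mt SimpleGraph.mem_adjPerms.2 hπ)).symm

theorem adjugate_apply_mul_apply (A : Matrix α α R) (u v : α) :
    A.adjugate u v * A v u = ∑ π with π u = v, A.detTerm π := by
  rw [adjugate_apply, mul_comm, ← det_updateRow_smul, det_eq_sum_detTerm, sum_filter]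
  refine Fintype.sum_congr _ _ fun π => ?_
  split_ifs with hπ
  · refine congrArg _ (Fintype.prod_congr _ _ fun x => ?_)
    by_cases hx : π x = v
    · obtain rfl : x = u := π.injective (hx.trans hπ.symm)
      rw [hπ, updateRow_self, Pi.smul_apply, Pi.single_eq_same, smul_eq_mul, mul_one]
    · rw [updateRow_ne hx]
  · refine smul_eq_zero_of_right _ (prod_eq_zero (mem_univ (π⁻¹ v)) ?_)
    rw [Perm.coe_inv, apply_symm_apply, updateRow_self, Pi.smul_apply, Pi.single_eq_of_ne,
      smul_zero]
    rintro rfl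
    simp at hπ

theorem exists_perm_adj_swap_of_det_submatrix_ne_zero {G : SimpleGraph α}
    (hG : ∀ i j, ¬G.Adj i j → A i j = 0) {u v : α} (huv : G.Adj u v)
    (h : (A.submatrix (Subtype.val : {w // w ≠ u ∧ w ≠ v} → α) Subtype.val).det ≠ 0) :
    ∃ ρ : Perm α, (∀ x, G.Adj x (ρ x)) ∧ ρ u = v ∧ ρ v = u := by
  rw [det_eq_sum_adjPerms (A := A.submatrix _ _) (G := G.comap Subtype.val)
    fun i j h => hG _ _ h] at h
  obtain ⟨ω, hω, -⟩ := exists_ne_zero_of_sum_ne_zero h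
  have hωG : ∀ w : {w // w ≠ u ∧ w ≠ v}, G.Adj w (ω w) := (G.comap _).mem_adjPerms.1 hω
  refine ⟨Perm.ofSubtype ω * Equiv.swap u v, fun x => ?_, ?_, ?_⟩
  · by_cases hxu : x = u
    · subst hxu
      simpa [Perm.ofSubtype_apply_of_not_mem] using huv
    by_cases hxv : x = v
    · subst hxv
      simpa [Perm.ofSubtype_apply_of_not_mem] using huv.symm
    rw [Perm.mul_apply, swap_apply_of_ne_of_ne hxu hxv,
      Perm.ofSubtype_apply_of_mem ω ⟨hxu, hxv⟩]
    exact hωG ⟨x, hxu, hxv⟩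
  · simp [Perm.ofSubtype_apply_of_not_mem]
  · simp [Perm.ofSubtype_apply_of_not_mem]

theorem inv_mul_inv_eq_of_det_submatrix_eq_zero {K : Type*} [Field K] {A : Matrix α α K}
    (hA : IsUnit A.det) {u v : α} (huv : u ≠ v)
    (h : (A.submatrix (Subtype.val : {w // w ≠ u ∧ w ≠ v} → α) Subtype.val).det = 0) :
    A⁻¹ u u * A⁻¹ v v = A⁻¹ u v * A⁻¹ v u := by
  -- A kernel vector of the minor, extended by zero, is sent by `A` to a vector `y` supported on
  -- `{u, v}`; then `(y u, y v) ≠ 0` is a null vector of the block of `A⁻¹` on `{u, v}`.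
  obtain ⟨x, hx0, hx⟩ := exists_mulVec_eq_zero_iff.2 h
  let z : α → K := fun w => if hw : w ≠ u ∧ w ≠ v then x ⟨w, hw⟩ else 0
  have hz0 : z ≠ 0 := fun hz => hx0 (funext fun w => by simpa [z, w.2] using congrFun hz w)
  have hAz : ∀ w, w ≠ u ∧ w ≠ v → (A *ᵥ z) w = 0 := by
    intro w hw
    refine Eq.trans ?_ (congrFun hx ⟨w, hw⟩)
    rw [mulVec, mulVec, dotProduct, dotProduct,
      ← Fintype.sum_subtype_add_sum_subtype fun w => w ≠ u ∧ w ≠ v,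
      Fintype.sum_eq_zero (fun q : {q // ¬(q ≠ u ∧ q ≠ v)} => A w q * z q)
        fun q => by simp only [z, dif_neg q.2, mul_zero], add_zero]
    exact Fintype.sum_congr _ _ fun q => by simp only [z, dif_pos q.2]; rfl
  set y := A *ᵥ z
  have hzy : z = A⁻¹ *ᵥ y := by rw [mulVec_mulVec, nonsing_inv_mul _ hA, one_mulVec]
  have hrow : ∀ w, z w = A⁻¹ w u * y u + A⁻¹ w v * y v := fun w => by
    rw [hzy, mulVec, dotProduct,
      Fintype.sum_eq_add u v huv fun w hw => by rw [hAz w hw, mul_zero]]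
  have hu : A⁻¹ u u * y u + A⁻¹ u v * y v = 0 := by rw [← hrow]; simp [z]
  have hv : A⁻¹ v u * y u + A⁻¹ v v * y v = 0 := by rw [← hrow]; simp [z]
  have hy : y u ≠ 0 ∨ y v ≠ 0 := by
    by_contra! hy
    exact hz0 (funext fun w => by simp [hrow, hy])
  rcases hy with hyu | hyv
  · exact mul_right_cancel₀ hyu (by linear_combination A⁻¹ v v * hu - A⁻¹ u v * hv)
  · exact mul_right_cancel₀ hyv (by linear_combination A⁻¹ u u * hv - A⁻¹ v u * hu)

end Matrix

theorem sachsDeg_eq_ncard {n : ℕ} (H : SimpleGraph (Fin n)) (v : Fin n) :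
    sachsDeg H v = (H.neighborSet v).ncard := by
  rw [sachsDeg, ← Nat.card_coe_set_eq]
  rfl

theorem sachsDeg_eq_degree {n : ℕ} (H : SimpleGraph (Fin n)) [DecidableRel H.Adj]
    (v : Fin n) : sachsDeg H v = H.degree v := by
  rw [sachsDeg_eq_ncard, ← SimpleGraph.card_neighborSet_eq_degree, Set.ncard_eq_toFinset_card',
    Set.toFinset_card]

theorem sachsDeg_toSimpleGraph {n : ℕ} {π : Perm (Fin n)} (hπ : ∀ x, π x ≠ x) (x : Fin n) :
    sachsDeg π.toSimpleGraph x = if π (π x) = x then 1 else 2 := by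
  rw [sachsDeg_eq_ncard, Perm.neighborSet_toSimpleGraph hπ]
  split_ifs with h
  · rw [(Perm.eq_inv_iff_eq.2 h).symm, Set.pair_eq_singleton, Set.ncard_singleton]
  · exact Set.ncard_pair fun h' => h (Perm.eq_inv_iff_eq.1 h')

theorem isSachsSubgraph_toSimpleGraph {n : ℕ} {G : SimpleGraph (Fin n)} {π : Perm (Fin n)}
    (hπ : ∀ x, G.Adj x (π x)) : IsSachsSubgraph G π.toSimpleGraph := by
  have hfix : ∀ x, π x ≠ x := fun x => (G.ne_of_adj (hπ x)).symm
  have hdeg : ∀ x, sachsDeg π.toSimpleGraph (π x) = sachsDeg π.toSimpleGraph x := fun x => by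
    simp only [sachsDeg_toSimpleGraph hfix, EmbeddingLike.apply_eq_iff_eq]
  refine ⟨fun x y hxy => ?_, fun x => ?_, fun x y hxy => ?_⟩
  · obtain ⟨-, rfl | rfl⟩ := (SimpleGraph.fromRel_adj _ _ _).1 hxy
    exacts [hπ x, (hπ y).symm]
  · rw [sachsDeg_toSimpleGraph hfix]
    split_ifs <;> simp
  · obtain ⟨-, rfl | rfl⟩ := (SimpleGraph.fromRel_adj _ _ _).1 hxy <;> rw [hdeg] <;> omega

namespace IsSachsSubgraph

variable {n : ℕ} {G S : SimpleGraph (Fin n)}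

theorem sachsDeg_eq_of_adj (hS : IsSachsSubgraph G S) {u v : Fin n} (h : S.Adj u v) :
    sachsDeg S u = sachsDeg S v := by
  have huv := hS.2.2 u v h
  have hvu := hS.2.2 v u h.symm
  rcases hS.2.1 u with hu | hu <;> rcases hS.2.1 v with hv | hv <;> simp_all

theorem exists_perm (hS : IsSachsSubgraph G S) : ∃ π : Perm (Fin n), ∀ v, S.Adj v (π v) := by
  refine S.exists_perm_adj_of_degree_eq (fun v => ?_) fun u v h => ?_
  · rw [← sachsDeg_eq_degree]
    rcases hS.2.1 v with h | h <;> omega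
  · rw [← sachsDeg_eq_degree, ← sachsDeg_eq_degree]
    exact hS.sachsDeg_eq_of_adj h

end IsSachsSubgraph

section UniqueSachsSubgraph

variable {n : ℕ} {G S : SimpleGraph (Fin n)}

theorem neighborSet_eq_of_unique (huniq : ∀ S', IsSachsSubgraph G S' → S' = S)
    {π : Perm (Fin n)} (hπ : ∀ x, G.Adj x (π x)) (x : Fin n) :
    S.neighborSet x = {π x, π⁻¹ x} := by
  rw [← huniq _ (isSachsSubgraph_toSimpleGraph hπ),
    Perm.neighborSet_toSimpleGraph fun x => (G.ne_of_adj (hπ x)).symm]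

theorem adj_apply_of_unique (huniq : ∀ S', IsSachsSubgraph G S' → S' = S)
    {π : Perm (Fin n)} (hπ : ∀ x, G.Adj x (π x)) (x : Fin n) : S.Adj x (π x) := by
  change π x ∈ S.neighborSet x
  rw [neighborSet_eq_of_unique huniq hπ]
  exact Set.mem_insert _ _

theorem apply_apply_ne_of_unique (huniq : ∀ S', IsSachsSubgraph G S' → S' = S)
    {π : Perm (Fin n)} (hπ : ∀ x, G.Adj x (π x)) {x : Fin n} (hx : sachsDeg S x = 2) :
    π (π x) ≠ x := by
  rw [← huniq _ (isSachsSubgraph_toSimpleGraph hπ),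
    sachsDeg_toSimpleGraph fun x => (G.ne_of_adj (hπ x)).symm] at hx
  intro h
  rw [if_pos h] at hx
  exact absurd hx (by norm_num)

theorem odd_minimalPeriod_of_unique (huniq : ∀ S', IsSachsSubgraph G S' → S' = S)
    {π : Perm (Fin n)} (hπ : ∀ x, G.Adj x (π x)) {x : Fin n} (hx : sachsDeg S x = 2) :
    Odd (Function.minimalPeriod π x) := by
  by_contra h
  obtain ⟨ρ, hρx, hρ⟩ :=
    π.exists_perm_apply_apply_eq_of_even_minimalPeriod (Nat.not_odd_iff_even.1 h)
  refine apply_apply_ne_of_unique huniq (fun y => ?_) hx hρx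
  rcases hρ y with h | h <;> rw [h]
  exacts [hπ y, by simpa using (hπ (π⁻¹ y)).symm]

variable {R K : Type*} [CommRing R] [Field K] [CharZero K]

theorem detTerm_eq_of_unique {A : Matrix (Fin n) (Fin n) R} (hA : A.IsSymm)
    (huniq : ∀ S', IsSachsSubgraph G S' → S' = S) {π σ : Perm (Fin n)}
    (hπ : ∀ x, G.Adj x (π x)) (hσ : ∀ x, G.Adj x (σ x)) : A.detTerm π = A.detTerm σ :=
  A.detTerm_eq_of_pair_eq hA fun x =>
    (neighborSet_eq_of_unique huniq hπ x).symm.trans (neighborSet_eq_of_unique huniq hσ x)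

theorem det_ne_zero_of_unique {A : Matrix (Fin n) (Fin n) K} (hA : A.IsSymm)
    (hG : ∀ i j, ¬G.Adj i j → A i j = 0) (hne : ∀ i j, G.Adj i j → A i j ≠ 0)
    (huniq : ∀ S', IsSachsSubgraph G S' → S' = S) {π : Perm (Fin n)}
    (hπ : ∀ x, G.Adj x (π x)) : A.det ≠ 0 := by
  rw [Matrix.det_eq_sum_adjPerms hG, sum_eq_card_nsmul fun σ hσ =>
    detTerm_eq_of_unique hA huniq (SimpleGraph.mem_adjPerms.1 hσ) hπ, nsmul_eq_mul]
  refine mul_ne_zero (Nat.cast_ne_zero.2 (card_ne_zero_of_mem (G.mem_adjPerms.2 hπ))) ?_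
  simpa [Matrix.detTerm, Units.smul_def, prod_ne_zero_iff] using fun x => hne _ _ (hπ x).symm

theorem two_mul_adjugate_apply_mul_apply_of_unique {A : Matrix (Fin n) (Fin n) R}
    (hA : A.IsSymm) (hG : ∀ i j, ¬G.Adj i j → A i j = 0)
    (huniq : ∀ S', IsSachsSubgraph G S' → S' = S) {u v : Fin n} (huv : S.Adj u v)
    (hu : sachsDeg S u = 2) : 2 * (A.adjugate u v * A v u) = A.det := by
  have hsplit : ∀ π ∈ G.adjPerms, π u = v ↔ π⁻¹ u ≠ v := fun π hπ => by
    have hv : v ∈ S.neighborSet u := huv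
    rw [neighborSet_eq_of_unique huniq (SimpleGraph.mem_adjPerms.1 hπ), Set.mem_insert_iff,
      Set.mem_singleton_iff] at hv
    have hne : π u ≠ π⁻¹ u := fun h =>
      apply_apply_ne_of_unique huniq (SimpleGraph.mem_adjPerms.1 hπ) hu (Perm.eq_inv_iff_eq.1 h)
    grind
  have hinv : ∀ π ∈ G.adjPerms, π⁻¹ ∈ G.adjPerms := fun π hπ =>
    G.mem_adjPerms.2 fun x => by simpa using (G.mem_adjPerms.1 hπ (π⁻¹ x)).symm
  have hhalf : ∑ π ∈ G.adjPerms with π u = v, A.detTerm π =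
      ∑ π ∈ G.adjPerms with ¬π u = v, A.detTerm π := by
    refine sum_nbij' (·⁻¹) (·⁻¹) (fun π hπ => ?_) (fun π hπ => ?_)
      (fun π _ => inv_inv π) (fun π _ => inv_inv π) fun π _ => (A.detTerm_inv hA π).symm
    · rw [mem_filter] at hπ ⊢
      exact ⟨hinv π hπ.1, (hsplit π hπ.1).1 hπ.2⟩
    · rw [mem_filter] at hπ ⊢
      exact ⟨hinv π hπ.1, not_not.1 (mt (hsplit π hπ.1).2 hπ.2)⟩
  have hadj : A.adjugate u v * A v u = ∑ π ∈ G.adjPerms with π u = v, A.detTerm π := by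
    rw [Matrix.adjugate_apply_mul_apply]
    refine (sum_subset (filter_subset_filter _ (subset_univ _)) fun π hπ hπ' => ?_).symm
    exact Matrix.detTerm_eq_zero_of_not_adj hG fun h =>
      hπ' (mem_filter.2 ⟨SimpleGraph.mem_adjPerms.2 h, (mem_filter.1 hπ).2⟩)
  rw [hadj, Matrix.det_eq_sum_adjPerms hG,
    ← sum_filter_add_sum_filter_not G.adjPerms fun π => π u = v, ← hhalf, two_mul]

theorem det_submatrix_eq_zero_of_unique {A : Matrix (Fin n) (Fin n) R}
    (hG : ∀ i j, ¬G.Adj i j → A i j = 0) (hle : S ≤ G)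
    (huniq : ∀ S', IsSachsSubgraph G S' → S' = S) {u v : Fin n} (huv : S.Adj u v)
    (hu : sachsDeg S u = 2) :
    (A.submatrix (Subtype.val : {w // w ≠ u ∧ w ≠ v} → Fin n) Subtype.val).det = 0 := by
  by_contra h
  obtain ⟨ρ, hρ, hρu, hρv⟩ :=
    Matrix.exists_perm_adj_swap_of_det_submatrix_ne_zero hG (hle huv) h
  exact apply_apply_ne_of_unique huniq hρ hu (by rw [hρu, hρv])

theorem inv_apply_self_mul_inv_apply_self_of_unique {A : Matrix (Fin n) (Fin n) K}
    (hA : A.IsSymm) (hG : ∀ i j, ¬G.Adj i j → A i j = 0)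
    (hone : ∀ i j, G.Adj i j → A i j * A j i = 1) (hS : IsSachsSubgraph G S)
    (huniq : ∀ S', IsSachsSubgraph G S' → S' = S) {π : Perm (Fin n)}
    (hπ : ∀ x, G.Adj x (π x)) {x : Fin n} (hx : sachsDeg S x = 2) :
    A⁻¹ x x * A⁻¹ (π x) (π x) = 1 / 4 := by
  have hdet : A.det ≠ 0 :=
    det_ne_zero_of_unique hA hG (fun i j h => left_ne_zero_of_mul_eq_one (hone i j h)) huniq hπ
  have hxy : S.Adj x (π x) := adj_apply_of_unique huniq hπ x
  have hy : sachsDeg S (π x) = 2 := hS.sachsDeg_eq_of_adj hxy ▸ hx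
  have hhalf : ∀ u v, S.Adj u v → sachsDeg S u = 2 → A⁻¹ u v * A v u = 1 / 2 :=
    fun u v huv hu => by
      have h2 := two_mul_adjugate_apply_mul_apply_of_unique hA hG huniq huv hu
      rw [Matrix.inv_def, Matrix.smul_apply, smul_eq_mul, Ring.inverse_eq_inv', mul_assoc]
      field_simp
      linear_combination h2
  rw [Matrix.inv_mul_inv_eq_of_det_submatrix_eq_zero hdet.isUnit (S.ne_of_adj hxy)
    (det_submatrix_eq_zero_of_unique hG hS.1 huniq hxy hx)]
  linear_combination A⁻¹ (π x) x * A x (π x) * hhalf x (π x) hxy hx +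
    1 / 2 * hhalf (π x) x hxy.symm hy -
    A⁻¹ x (π x) * A⁻¹ (π x) x * hone x (π x) (hS.1 hxy)

theorem sq_inv_apply_self_of_unique {A : Matrix (Fin n) (Fin n) K} (hA : A.IsSymm)
    (hG : ∀ i j, ¬G.Adj i j → A i j = 0) (hone : ∀ i j, G.Adj i j → A i j * A j i = 1)
    (hS : IsSachsSubgraph G S) (huniq : ∀ S', IsSachsSubgraph G S' → S' = S) {i : Fin n}
    (hi : sachsDeg S i = 2) : A⁻¹ i i ^ 2 = 1 / 4 := by
  obtain ⟨π, hπS⟩ := hS.exists_perm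
  have hπ : ∀ x, G.Adj x (π x) := fun x => hS.1 (hπS x)
  have hdeg : ∀ k, sachsDeg S (π^[k] i) = 2 := by
    intro k
    induction k with
    | zero => exact hi
    | succ k ih => rw [Function.iterate_succ_apply', ← hS.sachsDeg_eq_of_adj (hπS _), ih]
  refine Function.sq_eq_of_forall_mul_iterate_eq (g := fun x => A⁻¹ x x) (by norm_num)
    (fun k => ?_) (odd_minimalPeriod_of_unique huniq hπ hi)
  rw [Function.iterate_succ_apply']
  exact inv_apply_self_mul_inv_apply_self_of_unique hA hG hone hS huniq hπ (hdeg k)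

end UniqueSachsSubgraph

/-- If a simple graph `G` has a unique Sachs subgraph `S` which is not a
perfect matching (i.e. `S` contains a cycle, so some vertex has degree `2` in `S`),
then there is a vertex `i` such that for every signing `σ` of `G`, the diagonal entry
`(A⁻¹)_{ii}` of the inverse adjacency matrix has absolute value `1/2`; in particular the
inverse of `(G,σ)` is neither integral nor simple. -/
theorem unique_sachs_with_cycle_gives_half_diagonal
    {n : ℕ} (G : SimpleGraph (Fin n))
    (S : SimpleGraph (Fin n)) (hS : IsSachsSubgraph G S)
    (huniq : ∀ S' : SimpleGraph (Fin n), IsSachsSubgraph G S' → S' = S)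
    (hcyc : ∃ v, sachsDeg S v = 2) :
    ∃ i : Fin n, ∀ (σ : Fin n → Fin n → ℝ), (∀ a b, σ a b = σ b a) →
      (∀ a b, G.Adj a b → σ a b = 1 ∨ σ a b = -1) →
      ∀ A : Matrix (Fin n) (Fin n) ℝ,
        A = Matrix.of (fun a b => if G.Adj a b then σ a b else 0) →
        |A⁻¹ i i| = 1 / 2 ∧
        ¬(∀ a b, ∃ z : ℤ, A⁻¹ a b = (z : ℝ)) ∧ ¬(∀ a, A⁻¹ a a = 0) := by
  obtain ⟨i, hi⟩ := hcyc
  refine ⟨i, fun σ hσ hσG A hA => ?_⟩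
  have hAij : ∀ a b, A a b = if G.Adj a b then σ a b else 0 := fun a b => by
    rw [hA, Matrix.of_apply]
  have hsymm : A.IsSymm := Matrix.IsSymm.ext fun a b => by rw [hAij, hAij, hσ, G.adj_comm]
  have hG : ∀ a b, ¬G.Adj a b → A a b = 0 := fun a b h => by rw [hAij, if_neg h]
  have hone : ∀ a b, G.Adj a b → A a b * A b a = 1 := fun a b h => by
    rw [hAij, hAij, if_pos h, if_pos h.symm, hσ b a]
    rcases hσG a b h with h' | h' <;> rw [h'] <;> norm_num
  have hsq := sq_inv_apply_self_of_unique hsymm hG hone hS huniq hi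
  have habs : |A⁻¹ i i| = 1 / 2 := by
    rw [← abs_of_pos (by norm_num : (0 : ℝ) < 1 / 2), ← sq_eq_sq_iff_abs_eq_abs, hsq]
    norm_num
  refine ⟨habs, fun hint => ?_, fun hsimple => ?_⟩
  · obtain ⟨z, hz⟩ := hint i i
    rw [hz] at hsq
    have h2z : ((2 * z : ℤ) : ℝ) * (2 * z : ℤ) = 1 := by
      push_cast
      linear_combination 4 * hsq
    rcases Int.eq_one_or_neg_one_of_mul_eq_one (by exact_mod_cast h2z) with h | h <;> omega
  · rw [hsimple i, abs_zero] at habs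
    norm_num at habs
end

section
/- Every simple signed corona graph (G,σ) is self-invertible: its adjacency matrix A is invertible, A⁻¹ is the adjacency matrix of a signed graph (G⁻¹,σ⁻¹), and G⁻¹ is isomorphic to G via the map swapping each degree-1 vertex u_i with its neighbor v_i. -/
open scoped Classical

/-- The corona of a graph `H` on `Fin n`: each vertex `inl i` (a vertex `v_i` of `H`)
gets a new pendant neighbor `inr i` (the vertex `u_i`). -/
def corona {n : ℕ} (H : SimpleGraph (Fin n)) : SimpleGraph (Fin n ⊕ Fin n) where
  Adj x y :=
    match x, y with
    | .inl i, .inl j => H.Adj i j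
    | .inl i, .inr j => i = j
    | .inr i, .inl j => i = j
    | .inr _, .inr _ => False
  symm := by
    constructor
    rintro (i | i) (j | j) h
    · exact H.adj_symm h
    · exact h.symm
    · exact h.symm
    · exact h.elim
  loopless := by
    constructor
    rintro (i | i) h
    · exact H.irrefl h
    · exact h.elim

/-!
In block form with respect to `V(G) = {v_i} ⊔ {u_i}`, the signed adjacency matrix of the corona
is `A = [[S, D], [D, 0]]`, where `S` is the signed adjacency matrix of `H` and `D` is the diagonal
matrix of the signs `σ(v_i u_i) = ±1`. Since `D² = 1`, the inverse is
`A⁻¹ = [[0, D], [D, -DSD]]`: its `v`-block vanishes, its `uv`-block is `D` again and its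
`u`-block has the support of `S`. Hence exchanging `u_i ↔ v_i` carries the support of `A⁻¹`
onto that of `A`.
-/

open Matrix

namespace Matrix

variable {m α : Type*} [Fintype m] [DecidableEq m] [Ring α]

theorem fromBlocks_mul_fromBlocks_eq_one_of_mul_self_eq_one (S D : Matrix m m α)
    (hD : D * D = 1) :
    fromBlocks S D D 0 * fromBlocks 0 D D (-(D * S * D)) = 1 := by
  rw [fromBlocks_multiply, ← fromBlocks_one]
  simp [hD, ← Matrix.mul_assoc]

theorem fromBlocks_neg_conj_apply_ne_zero_iff [NoZeroDivisors α] {d : m → α}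
    (hd : ∀ i, d i ≠ 0) (S : Matrix m m α) (x y : m ⊕ m) :
    fromBlocks (-(diagonal d * S * diagonal d)) (diagonal d) (diagonal d) 0 x y ≠ 0 ↔
      fromBlocks S (diagonal d) (diagonal d) 0 x y ≠ 0 := by
  rcases x with i | i <;> rcases y with j | j <;> simp [hd]

end Matrix

noncomputable def SimpleGraph.signedAdjMatrix {V α : Type*} [Zero α] (G : SimpleGraph V)
    (σ : V → V → α) : Matrix V V α :=
  of fun x y => if G.Adj x y then σ x y else 0

theorem SimpleGraph.signedAdjMatrix_apply_ne_zero_iff {V α : Type*} [Zero α]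
    {G : SimpleGraph V} {σ : V → V → α} (hσ : ∀ x y, G.Adj x y → σ x y ≠ 0) (x y : V) :
    G.signedAdjMatrix σ x y ≠ 0 ↔ G.Adj x y := by
  by_cases h : G.Adj x y <;> simp [SimpleGraph.signedAdjMatrix, h, hσ]

theorem corona_signedAdjMatrix {n : ℕ} {α : Type*} [Zero α] (H : SimpleGraph (Fin n))
    (σ : (Fin n ⊕ Fin n) → (Fin n ⊕ Fin n) → α)
    (hσ : ∀ i, σ (.inr i) (.inl i) = σ (.inl i) (.inr i)) :
    (corona H).signedAdjMatrix σ =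
      fromBlocks (H.signedAdjMatrix fun i j => σ (.inl i) (.inl j))
        (diagonal fun i => σ (.inl i) (.inr i)) (diagonal fun i => σ (.inl i) (.inr i)) 0 := by
  ext (i | i) (j | j) <;>
    simp only [SimpleGraph.signedAdjMatrix, of_apply, fromBlocks_apply₁₁, fromBlocks_apply₁₂,
      fromBlocks_apply₂₁, fromBlocks_apply₂₂, diagonal_apply, Matrix.zero_apply] <;>
    split_ifs <;> simp_all [corona]

/-- Every simple signed corona graph `(G,σ)` is self-invertible: its
adjacency matrix `A` is invertible, `A⁻¹` is the adjacency matrix of a signed graph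
`(G⁻¹,σ⁻¹)` with `σ⁻¹(u_iv_i) = σ(u_iv_i)`,
`σ⁻¹(u_iu_j) = −σ(u_iv_i)σ(v_iv_j)σ(v_ju_j)` for `v_iv_j ∈ E(H)`, and `σ⁻¹ = 0`
otherwise, and `G⁻¹` is isomorphic to `G` via the map swapping each pendant vertex
`u_i` with its neighbor `v_i`. -/
theorem signed_corona_self_invertible
    {n : ℕ} (H : SimpleGraph (Fin n))
    (σ : (Fin n ⊕ Fin n) → (Fin n ⊕ Fin n) → ℝ)
    (hσsymm : ∀ x y, σ x y = σ y x)
    (hσval : ∀ x y, (corona H).Adj x y → σ x y = 1 ∨ σ x y = -1)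
    (A : Matrix (Fin n ⊕ Fin n) (Fin n ⊕ Fin n) ℝ)
    (hAdef : A = Matrix.of fun x y => if (corona H).Adj x y then σ x y else 0) :
    A.det ≠ 0 ∧
    (∀ i j, A⁻¹ (Sum.inl i) (Sum.inl j) = 0) ∧
    (∀ i j, A⁻¹ (Sum.inl i) (Sum.inr j) =
      if i = j then σ (Sum.inl i) (Sum.inr i) else 0) ∧
    (∀ i j, A⁻¹ (Sum.inr i) (Sum.inr j) =
      if H.Adj i j then
        -(σ (Sum.inr i) (Sum.inl i) * σ (Sum.inl i) (Sum.inl j) *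
          σ (Sum.inl j) (Sum.inr j))
      else 0) ∧
    (∀ x y, A⁻¹ (Sum.elim Sum.inr Sum.inl x) (Sum.elim Sum.inr Sum.inl y) ≠ 0 ↔
      (corona H).Adj x y) := by
  set d : Fin n → ℝ := fun i => σ (.inl i) (.inr i)
  set S := H.signedAdjMatrix fun i j => σ (.inl i) (.inl j)
  have hσne : ∀ x y, (corona H).Adj x y → σ x y ≠ 0 := fun x y hxy => by
    rcases hσval x y hxy with h | h <;> simp [h]
  have hd : ∀ i, d i * d i = 1 := fun i => mul_self_eq_one_iff.2 (hσval _ _ rfl)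
  have hdne : ∀ i, d i ≠ 0 := fun i => hσne _ _ rfl
  have hD : diagonal d * diagonal d = 1 := by simp [hd]
  have hA' : A = (corona H).signedAdjMatrix σ := hAdef
  have hA : A = fromBlocks S (diagonal d) (diagonal d) 0 :=
    hA'.trans (corona_signedAdjMatrix H σ fun i => hσsymm _ _)
  have hAB := hA ▸ fromBlocks_mul_fromBlocks_eq_one_of_mul_self_eq_one S _ hD
  have hinv := inv_eq_right_inv hAB
  refine ⟨det_ne_zero_of_right_inverse hAB, ?_, ?_, ?_, ?_⟩
  · simp [hinv]
  · intro i j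
    rw [hinv]
    rfl
  · intro i j
    by_cases hij : H.Adj i j <;> simp [hinv, S, SimpleGraph.signedAdjMatrix, hij, d, hσsymm]
  · intro x y
    change A⁻¹.submatrix Sum.swap Sum.swap x y ≠ 0 ↔ _
    rw [hinv, fromBlocks_submatrix_sum_swap_sum_swap,
      ← SimpleGraph.signedAdjMatrix_apply_ne_zero_iff hσne, ← hA', hA]
    exact fromBlocks_neg_conj_apply_ne_zero_iff hdne S x y
end

section
/- Let G be the stellated graph of a tree T with at least two vertices. Then the median eigenvalues of G satisfy −1 ≤ λ_L(G) < 0 < λ_H(G) ≤ 1, where λ_H and λ_L are the ⌊(n+1)/2⌋-th and ⌈(n+1)/2⌉-th largest adjacency eigenvalues of G and n = |V(G)|. -/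
open scoped Classical

/-- The stellated graph (= line graph of the subdivision) of `G`: vertices are the darts
of `G`; two darts are adjacent iff they share their initial vertex or are the two darts
of a common edge of `G`. -/
def stellated {V : Type*} (G : SimpleGraph V) : SimpleGraph G.Dart where
  Adj d₁ d₂ := d₁ ≠ d₂ ∧ (d₁.fst = d₂.fst ∨ d₂ = d₁.symm)
  symm := by
    constructor
    rintro d₁ d₂ ⟨hne, h | h⟩
    · exact ⟨hne.symm, Or.inl h.symm⟩
    · refine ⟨hne.symm, Or.inr ?_⟩
      subst h; simp
  loopless := by constructor; rintro d ⟨hne, -⟩; exact hne rfl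

/-!
Let `A` be the adjacency matrix of `st(T)`, acting on functions `x` on the darts of `T`, and let
`σ_x(v)` be the sum of `x` over the darts leaving `v`. Then
`xᵀAx = ∑_v σ_x(v)² - |x|² + ∑_d x(d) x(d̄)`, and by Sylvester's law of inertia the number
of eigenvalues above (below) `c` is the largest dimension of a subspace on which `xᵀAx - c|x|²`
is positive (negative) definite.

* Symmetric functions (`x(d̄) = x(d)`) form a positive definite subspace of dimension `n - 1`:
  there `xᵀAx = ∑_v σ_x(v)²`, and a tree carries no nonzero edge weighting with all vertex
  sums `0`.
* Root `T` at `r`. Functions supported on the darts pointing towards `r` form a totally isotropic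
  complement of the symmetric functions. Hence the `A`-orthogonal complement of the symmetric
  functions, of dimension at least `n - 1`, is negative definite.
* As `st(T)` has `2(n - 1)` vertices, exactly `n - 1` eigenvalues are positive and `n - 1` negative.
* Functions whose vertex sums vanish at the (at most `n - 2`) internal vertices satisfy
  `xᵀAx ≤ |x|²`, and the `n`-dimensional space of functions `x(d) = g(d.fst)` satisfies
  `xᵀAx ≥ -|x|²`; so at most `n - 2` eigenvalues exceed `1` and at most `n - 2` lie below `-1`.
-/

open Matrix Finset Module

lemma exists_and_not_of_card_subtype_lt {ι : Type*} [Finite ι] {p q : ι → Prop}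
    (h : Nat.card {i // p i} < Nat.card {i // q i}) : ∃ i, q i ∧ ¬ p i := by
  by_contra! hqp
  exact h.not_ge <| Nat.card_le_card_of_injective (fun i => ⟨i.1, hqp i.1 i.2⟩)
    fun i j hij => Subtype.ext (Subtype.mk.inj hij)

lemma Matrix.dotProduct_conj_diagonal_mulVec {ι : Type*} [Fintype ι] [DecidableEq ι]
    (U : Matrix ι ι ℝ) (w : ι → ℝ) (x : ι → ℝ) :
    x ⬝ᵥ (U * diagonal w * star U) *ᵥ x = ∑ i, w i * (star U *ᵥ x) i ^ 2 := by
  rw [← mulVec_mulVec, ← mulVec_mulVec, dotProduct_mulVec, ← mulVec_transpose,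
    ← conjTranspose_eq_transpose_of_trivial, ← star_eq_conjTranspose]
  simp [dotProduct, mulVec_diagonal, pow_two, mul_left_comm]

lemma Matrix.toQuadraticForm'_sub_smul_one_apply {ι : Type*} [Fintype ι] [DecidableEq ι]
    (A : Matrix ι ι ℝ) (c : ℝ) (x : ι → ℝ) :
    (A - c • 1).toQuadraticForm' x = x ⬝ᵥ A *ᵥ x - c * (x ⬝ᵥ x) := by
  simp [Matrix.toQuadraticForm', toLinearMap₂'_apply']

namespace Matrix.IsHermitian

open QuadraticMap QuadraticForm

variable {ι : Type*} [Fintype ι] [DecidableEq ι] {A : Matrix ι ι ℝ}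

theorem equivalent_weightedSumSquares (hA : A.IsHermitian) (c : ℝ) :
    (A - c • 1).toQuadraticForm'.Equivalent
      (weightedSumSquares ℝ fun i => hA.eigenvalues i - c) := by
  set U : Matrix ι ι ℝ := (hA.eigenvectorUnitary : Matrix ι ι ℝ)
  refine ⟨⟨UnitaryGroup.toLinearEquiv (star hA.eigenvectorUnitary), fun x => ?_⟩⟩
  have hA' : x ⬝ᵥ A *ᵥ x = ∑ i, hA.eigenvalues i * (star U *ᵥ x) i ^ 2 := by
    conv_lhs => rw [hA.spectral_theorem]
    simpa using dotProduct_conj_diagonal_mulVec U hA.eigenvalues x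
  have h1 : x ⬝ᵥ x = ∑ i, (star U *ᵥ x) i ^ 2 := by
    simpa [U, Unitary.mul_star_self_of_mem hA.eigenvectorUnitary.2] using
      dotProduct_conj_diagonal_mulVec U 1 x
  rw [weightedSumSquares_apply]
  change ∑ i, (hA.eigenvalues i - c) • ((star U *ᵥ x) i * (star U *ᵥ x) i) = _
  rw [toQuadraticForm'_sub_smul_one_apply, hA', h1, mul_sum, ← sum_sub_distrib]
  exact sum_congr rfl fun i _ => by rw [smul_eq_mul]; ring

theorem sigPos_toQuadraticForm'_sub_smul_one (hA : A.IsHermitian) (c : ℝ) :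
    sigPos (A - c • 1).toQuadraticForm' = Nat.card {i // c < hA.eigenvalues i} := by
  rw [sigPos_of_equiv_weightedSumSquares (hA.equivalent_weightedSumSquares c),
    ← Nat.card_coe_set_eq]
  simp only [sub_pos, Set.coe_ofPred]

theorem sigNeg_toQuadraticForm'_sub_smul_one (hA : A.IsHermitian) (c : ℝ) :
    sigNeg (A - c • 1).toQuadraticForm' = Nat.card {i // hA.eigenvalues i < c} := by
  rw [sigNeg_of_equiv_weightedSumSquares (hA.equivalent_weightedSumSquares c),
    ← Nat.card_coe_set_eq]
  simp only [sub_neg, Set.coe_ofPred]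

theorem finrank_le_card_eigenvalues_gt (hA : A.IsHermitian) {c : ℝ}
    {V : Submodule ℝ (ι → ℝ)} (hV : ∀ x ∈ V, x ≠ 0 → c * (x ⬝ᵥ x) < x ⬝ᵥ A *ᵥ x) :
    finrank ℝ V ≤ Nat.card {i // c < hA.eigenvalues i} := by
  rw [← hA.sigPos_toQuadraticForm'_sub_smul_one]
  refine le_sigPos_of_posDef _ fun x hx => ?_
  have := hV x x.2 (by simpa using hx)
  simp only [restrict_apply, toQuadraticForm'_sub_smul_one_apply]
  linarith

theorem finrank_le_card_eigenvalues_lt (hA : A.IsHermitian) {c : ℝ}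
    {V : Submodule ℝ (ι → ℝ)} (hV : ∀ x ∈ V, x ≠ 0 → x ⬝ᵥ A *ᵥ x < c * (x ⬝ᵥ x)) :
    finrank ℝ V ≤ Nat.card {i // hA.eigenvalues i < c} := by
  rw [← hA.sigNeg_toQuadraticForm'_sub_smul_one]
  refine le_sigNeg_of_negDef _ fun x hx => ?_
  have := hV x x.2 (by simpa using hx)
  simp only [restrict_apply, _root_.neg_apply, toQuadraticForm'_sub_smul_one_apply]
  linarith

theorem card_eigenvalues_gt_add_finrank_le (hA : A.IsHermitian) {c : ℝ}
    {V : Submodule ℝ (ι → ℝ)} (hV : ∀ x ∈ V, x ⬝ᵥ A *ᵥ x ≤ c * (x ⬝ᵥ x)) :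
    Nat.card {i // c < hA.eigenvalues i} + finrank ℝ V ≤ Fintype.card ι := by
  rw [← hA.sigPos_toQuadraticForm'_sub_smul_one, ← finrank_fintype_fun_eq_card (R := ℝ)]
  refine sigPos_add_finrank_le_of_nonpos fun x hx => ?_
  have := hV x hx
  rw [toQuadraticForm'_sub_smul_one_apply]
  linarith

theorem card_eigenvalues_lt_add_finrank_le (hA : A.IsHermitian) {c : ℝ}
    {V : Submodule ℝ (ι → ℝ)} (hV : ∀ x ∈ V, c * (x ⬝ᵥ x) ≤ x ⬝ᵥ A *ᵥ x) :
    Nat.card {i // hA.eigenvalues i < c} + finrank ℝ V ≤ Fintype.card ι := by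
  rw [← hA.sigNeg_toQuadraticForm'_sub_smul_one, ← finrank_fintype_fun_eq_card (R := ℝ),
    ← sigPos_neg]
  refine sigPos_add_finrank_le_of_nonpos fun x hx => ?_
  have := hV x hx
  rw [_root_.neg_apply, toQuadraticForm'_sub_smul_one_apply]
  linarith

theorem card_eigenvalues_pos_add_card_neg_le (hA : A.IsHermitian) :
    Nat.card {i // 0 < hA.eigenvalues i} + Nat.card {i // hA.eigenvalues i < 0} ≤
      Fintype.card ι := by
  rw [← hA.sigPos_toQuadraticForm'_sub_smul_one, ← hA.sigNeg_toQuadraticForm'_sub_smul_one,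
    ← finrank_fintype_fun_eq_card (R := ℝ), ← sigPos_add_sigNeg_add_radical]
  exact Nat.le_add_right _ _

end Matrix.IsHermitian

/-- Writing `x = u + w` with `u ∈ U` and `w ∈ W`, orthogonality to `U` and isotropy of `W` give
`xᵀAx = -uᵀAu`. -/
theorem Matrix.dotProduct_mulVec_neg_of_mem_orthogonal {ι : Type*} [Fintype ι] [DecidableEq ι]
    {A : Matrix ι ι ℝ} (hA : A.IsSymm)
    {U W : Submodule ℝ (ι → ℝ)} (hUW : U ⊔ W = ⊤)
    (hU : ∀ u ∈ U, u ≠ 0 → 0 < u ⬝ᵥ A *ᵥ u)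
    (hW : ∀ w ∈ W, w ⬝ᵥ A *ᵥ w = 0) {x : ι → ℝ}
    (hx : x ∈ (toBilin' A).orthogonal U) (hxW : x ∉ W) :
    x ⬝ᵥ A *ᵥ x < 0 := by
  obtain ⟨u, hu, w, hw, rfl⟩ := Submodule.mem_sup.1 (hUW ▸ Submodule.mem_top : x ∈ U ⊔ W)
  have hux : u ⬝ᵥ A *ᵥ (u + w) = 0 := by
    simpa [toBilin'_apply'] using (LinearMap.BilinForm.mem_orthogonal_iff.1 hx) u hu
  have hwu : w ⬝ᵥ A *ᵥ u = u ⬝ᵥ A *ᵥ w := by rw [← dotProduct_transpose_mulVec, hA.eq]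
  have hu0 : u ≠ 0 := by rintro rfl; simp [hw] at hxW
  have := hU u hu hu0
  simp only [mulVec_add, dotProduct_add, add_dotProduct] at hux ⊢
  linarith [hW w hw]

namespace SimpleGraph

section Stellated

variable {V : Type*} {G : SimpleGraph V}

lemma abs_dotProduct_comp_symm_le [Fintype G.Dart] (x : G.Dart → ℝ) :
    |x ⬝ᵥ (fun d => x d.symm)| ≤ x ⬝ᵥ x := by
  have hsymm : ∑ d : G.Dart, x d.symm ^ 2 = ∑ d, x d ^ 2 :=
    Equiv.sum_comp (Function.Involutive.toPerm _ Dart.symm_involutive) (fun d => x d ^ 2)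
  have hcs := sum_mul_sq_le_sq_mul_sq univ x (fun d => x d.symm)
  rw [hsymm, ← sq] at hcs
  simpa [dotProduct, sq] using abs_le_of_sq_le_sq hcs (sum_nonneg fun d _ => sq_nonneg (x d))

variable [DecidableEq V]

lemma stellated_adjMatrix_apply (d e : G.Dart) :
    (stellated G).adjMatrix ℝ d e =
      (if e.fst = d.fst then 1 else 0) - (if d = e then 1 else 0) +
        (if e = d.symm then 1 else 0) := by
  have hne : d ≠ d.symm := d.symm_ne.symm
  rw [adjMatrix_apply]
  by_cases hde : d = e
  · subst hde; simp [hne]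
  by_cases hes : e = d.symm
  · subst hes; simp [stellated, hde, d.fst_ne_snd]
  · simp [stellated, hde, hes, eq_comm]

variable [Fintype V] [DecidableRel G.Adj]

variable (G) in
def dartSum : (G.Dart → ℝ) →ₗ[ℝ] V → ℝ where
  toFun x v := ∑ d with d.fst = v, x d
  map_add' x y := by ext v; simp [sum_add_distrib]
  map_smul' c x := by ext v; simp [mul_sum]

lemma dartSum_apply (x : G.Dart → ℝ) (v : V) : G.dartSum x v = ∑ d with d.fst = v, x d := rfl

lemma stellated_adjMatrix_mulVec_apply (x : G.Dart → ℝ) (d : G.Dart) :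
    ((stellated G).adjMatrix ℝ *ᵥ x) d = G.dartSum x d.fst - x d + x d.symm := by
  simp only [mulVec, dotProduct, stellated_adjMatrix_apply, add_mul, sub_mul, ite_mul, one_mul,
    zero_mul, sum_add_distrib, sum_sub_distrib, sum_ite_eq, mem_univ, if_true, sum_ite_eq',
    dartSum_apply, sum_filter]

lemma sum_dartSum (x : G.Dart → ℝ) : ∑ v, G.dartSum x v = ∑ d, x d :=
  sum_fiberwise univ (fun d : G.Dart => d.fst) x

lemma sum_mul_dartSum (f : V → ℝ) (x : G.Dart → ℝ) :
    ∑ v, f v * G.dartSum x v = ∑ d : G.Dart, f d.fst * x d := by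
  simp only [dartSum_apply, mul_sum]
  rw [← sum_fiberwise univ (fun d : G.Dart => d.fst)]
  exact sum_congr rfl fun v _ => sum_congr rfl fun d hd => by rw [(mem_filter.1 hd).2]

lemma dartSum_comp_fst (g : V → ℝ) (v : V) :
    G.dartSum (fun d => g d.fst) v = G.degree v * g v := by
  rw [dartSum_apply, sum_congr rfl fun d hd => by rw [(mem_filter.1 hd).2],
    sum_const, dart_fst_fiber_card_eq_degree, nsmul_eq_mul]

lemma dotProduct_stellated_adjMatrix_mulVec (x : G.Dart → ℝ) :
    x ⬝ᵥ (stellated G).adjMatrix ℝ *ᵥ x =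
      ∑ v, G.dartSum x v ^ 2 - x ⬝ᵥ x + x ⬝ᵥ (fun d => x d.symm) := by
  have h : ∑ v, G.dartSum x v ^ 2 = ∑ d, x d * G.dartSum x d.fst := by
    simp only [sq, sum_mul_dartSum, mul_comm]
  simp only [dotProduct, stellated_adjMatrix_mulVec_apply, h, mul_add, mul_sub, sum_add_distrib,
    sum_sub_distrib]

lemma sum_dartSum_sq_le (x : G.Dart → ℝ) (hx : ∀ v, 2 ≤ G.degree v → G.dartSum x v = 0) :
    ∑ v, G.dartSum x v ^ 2 ≤ ∑ d, x d ^ 2 := by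
  rw [← sum_dartSum]
  refine sum_le_sum fun v _ => ?_
  have hnonneg : 0 ≤ G.dartSum (fun d => x d ^ 2) v := sum_nonneg fun d _ => sq_nonneg (x d)
  by_cases hv : 2 ≤ G.degree v
  · rwa [hx v hv, sq, zero_mul]
  · have hdeg : (G.degree v : ℝ) ≤ 1 := by exact_mod_cast Nat.le_of_lt_succ (not_le.1 hv)
    calc G.dartSum x v ^ 2 ≤ G.degree v * G.dartSum (fun d => x d ^ 2) v := by
          rw [← dart_fst_fiber_card_eq_degree]
          exact sq_sum_le_card_mul_sum_sq
      _ ≤ G.dartSum (fun d => x d ^ 2) v := mul_le_of_le_one_left hnonneg hdeg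

lemma dotProduct_stellated_adjMatrix_mulVec_le (x : G.Dart → ℝ)
    (hx : ∀ v, 2 ≤ G.degree v → G.dartSum x v = 0) :
    x ⬝ᵥ (stellated G).adjMatrix ℝ *ᵥ x ≤ x ⬝ᵥ x := by
  have hxx : x ⬝ᵥ x = ∑ d, x d ^ 2 := by simp [dotProduct, sq]
  rw [dotProduct_stellated_adjMatrix_mulVec]
  linarith [sum_dartSum_sq_le x hx, le_abs_self (x ⬝ᵥ fun d => x d.symm),
    abs_dotProduct_comp_symm_le x]

lemma neg_le_dotProduct_stellated_adjMatrix_mulVec_comp_fst (g : V → ℝ) :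
    -((fun d : G.Dart => g d.fst) ⬝ᵥ fun d => g d.fst) ≤
      (fun d : G.Dart => g d.fst) ⬝ᵥ (stellated G).adjMatrix ℝ *ᵥ fun d => g d.fst := by
  set x : G.Dart → ℝ := fun d => g d.fst
  have hxx : x ⬝ᵥ x = ∑ v, G.degree v * g v ^ 2 := by
    simp only [dotProduct, x, ← sq, ← sum_dartSum, dartSum_comp_fst (fun v => g v ^ 2)]
  have hsum : x ⬝ᵥ x ≤ ∑ v, G.dartSum x v ^ 2 := by
    rw [hxx]
    refine sum_le_sum fun v _ => ?_
    rw [dartSum_comp_fst, mul_pow]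
    have : (G.degree v : ℝ) ≤ (G.degree v : ℝ) ^ 2 := by
      exact_mod_cast Nat.le_self_pow two_ne_zero _
    nlinarith [sq_nonneg (g v)]
  rw [dotProduct_stellated_adjMatrix_mulVec]
  linarith [neg_abs_le (x ⬝ᵥ fun d => x d.symm), abs_dotProduct_comp_symm_le x]

end Stellated

section Rootward

variable {V : Type*} {G : SimpleGraph V}

def Dart.IsRootward (d : G.Dart) (r : V) : Prop := G.dist r d.snd + 1 = G.dist r d.fst

lemma Dart.IsRootward.not_symm {r : V} {d : G.Dart} (h : d.IsRootward r) :
    ¬ d.symm.IsRootward r := by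
  unfold IsRootward at *
  simp only [Dart.symm_toProd, Prod.fst_swap, Prod.snd_swap]
  omega

lemma IsTree.isRootward_or_isRootward_symm (hT : G.IsTree) (r : V) (d : G.Dart) :
    d.IsRootward r ∨ d.symm.IsRootward r :=
  (hT.dist_eq_dist_add_one_of_adj r d.adj).imp Eq.symm Eq.symm

lemma IsTree.eq_of_isRootward (hT : G.IsTree) {r : V} {d e : G.Dart} (hd : d.IsRootward r)
    (he : e.IsRootward r) (h : d.fst = e.fst) : d = e := by
  -- Appending either dart to a shortest path from `r` to its head gives a shortest, hence unique,
  -- path from `r` to the common tail.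
  obtain ⟨⟨v, a⟩, hva⟩ := d
  obtain ⟨⟨w, b⟩, hwb⟩ := e
  obtain rfl : v = w := h
  obtain ⟨p, -, hp⟩ := hT.connected.exists_path_of_dist r a
  obtain ⟨q, -, hq⟩ := hT.connected.exists_path_of_dist r b
  have hp' := (p.concat hva.symm).isPath_of_length_eq_dist <| by
    rw [Walk.length_concat, hp]; exact hd
  have hq' := (q.concat hwb.symm).isPath_of_length_eq_dist <| by
    rw [Walk.length_concat, hq]; exact he
  obtain ⟨rfl, -⟩ := Walk.concat_inj ((hT.existsUnique_path r v).unique hp' hq')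
  rfl

variable (G) in
def symmInvariant : Submodule ℝ (G.Dart → ℝ) where
  carrier := {x | ∀ d, x d.symm = x d}
  add_mem' hx hy d := by simp [hx d, hy d]
  zero_mem' _ := rfl
  smul_mem' c x hx d := by simp [hx d]

variable [Fintype V] [DecidableRel G.Adj]

variable (G) in
noncomputable def rootwardSupported (r : V) : Submodule ℝ (G.Dart → ℝ) :=
  Pi.spanSubset ℝ {d | d.IsRootward r}

lemma mem_rootwardSupported {r : V} {x : G.Dart → ℝ} :
    x ∈ G.rootwardSupported r ↔ ∀ d, ¬ d.IsRootward r → x d = 0 :=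
  Pi.mem_spanSubset_iff.trans Iff.rfl

lemma IsTree.isCompl_symmInvariant_rootwardSupported (hT : G.IsTree) (r : V) :
    IsCompl G.symmInvariant (G.rootwardSupported r) := by
  constructor
  · rw [Submodule.disjoint_def]
    intro x hxU hxW
    funext d
    rcases hT.isRootward_or_isRootward_symm r d with hd | hd
    · rw [← hxU d]
      exact mem_rootwardSupported.1 hxW _ hd.not_symm
    · exact mem_rootwardSupported.1 hxW _ fun h => h.not_symm hd
  · rw [codisjoint_iff, Submodule.eq_top_iff']
    intro x
    let u : G.Dart → ℝ := fun d => if d.IsRootward r then x d.symm else x d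
    refine Submodule.mem_sup.2 ⟨u, fun d => ?_, x - u, mem_rootwardSupported.2 fun d hd => ?_,
      add_sub_cancel _ _⟩
    · rcases hT.isRootward_or_isRootward_symm r d with hd | hd
      · simp [u, hd, hd.not_symm]
      · have : ¬ d.IsRootward r := fun h => h.not_symm hd
        simp [u, hd, this]
    · simp [u, hd]

lemma IsTree.ncard_isRootward (hT : G.IsTree) (r : V) :
    {d : G.Dart | d.IsRootward r}.ncard = #G.edgeFinset := by
  have himage : Dart.symm '' {d : G.Dart | d.IsRootward r} = {d | d.IsRootward r}ᶜ := by
    ext d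
    constructor
    · rintro ⟨e, he, rfl⟩
      exact he.not_symm
    · intro hd
      exact ⟨d.symm, (hT.isRootward_or_isRootward_symm r d).resolve_left hd, d.symm_symm⟩
  have h := Set.ncard_add_ncard_compl {d : G.Dart | d.IsRootward r}
  rw [← himage, Set.ncard_image_of_injective _ Dart.symm_involutive.injective,
    Nat.card_eq_fintype_card, dart_card_eq_twice_card_edges] at h
  omega

lemma IsTree.finrank_symmInvariant (hT : G.IsTree) :
    finrank ℝ G.symmInvariant = #G.edgeFinset := by
  obtain ⟨r⟩ := hT.connected.nonempty
  have h := Submodule.finrank_add_eq_of_isCompl (hT.isCompl_symmInvariant_rootwardSupported r)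
  rw [rootwardSupported, Pi.dim_spanSubset, hT.ncard_isRootward, finrank_fintype_fun_eq_card,
    dart_card_eq_twice_card_edges] at h
  omega

end Rootward

section StellatedTree

variable {V : Type*} [Fintype V] [DecidableEq V] {G : SimpleGraph V} [DecidableRel G.Adj]

lemma IsTree.dartSum_eq_of_mem_rootwardSupported (hT : G.IsTree) {r : V} {w : G.Dart → ℝ}
    (hw : w ∈ G.rootwardSupported r) {d : G.Dart} (hd : d.IsRootward r) :
    G.dartSum w d.fst = w d := by
  rw [dartSum_apply, sum_eq_single_of_mem d (by simp)]
  intro e he hed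
  exact mem_rootwardSupported.1 hw e fun he' => hed (hT.eq_of_isRootward he' hd (mem_filter.1 he).2)

lemma IsTree.stellated_adjMatrix_mulVec_apply_eq_zero (hT : G.IsTree) {r : V} {w : G.Dart → ℝ}
    (hw : w ∈ G.rootwardSupported r) {d : G.Dart} (hd : d.IsRootward r) :
    ((stellated G).adjMatrix ℝ *ᵥ w) d = 0 := by
  rw [stellated_adjMatrix_mulVec_apply, hT.dartSum_eq_of_mem_rootwardSupported hw hd,
    mem_rootwardSupported.1 hw _ hd.not_symm, sub_self, add_zero]

lemma IsTree.dotProduct_stellated_adjMatrix_mulVec_eq_zero (hT : G.IsTree) {r : V}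
    {w : G.Dart → ℝ} (hw : w ∈ G.rootwardSupported r) :
    w ⬝ᵥ (stellated G).adjMatrix ℝ *ᵥ w = 0 := by
  refine sum_eq_zero fun d _ => ?_
  by_cases hd : d.IsRootward r
  · rw [hT.stellated_adjMatrix_mulVec_apply_eq_zero hw hd, mul_zero]
  · rw [mem_rootwardSupported.1 hw d hd, zero_mul]

lemma IsTree.eq_zero_of_mem_rootwardSupported (hT : G.IsTree) {r : V} {w : G.Dart → ℝ}
    (hw : w ∈ G.rootwardSupported r)
    (hAw : ∀ d,
      ((stellated G).adjMatrix ℝ *ᵥ w) d + ((stellated G).adjMatrix ℝ *ᵥ w) d.symm = 0) :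
    w = 0 := by
  -- For rootward `d`, `(Aw)(d̄) = σ_w(d.snd) + w(d)`, and `σ_w(d.snd)` only involves rootward
  -- darts one step closer to `r`: induct on the distance from `r`.
  have key : ∀ k, ∀ d : G.Dart, d.IsRootward r → G.dist r d.fst = k → w d = 0 := by
    intro k
    induction k using Nat.strong_induction_on with
    | _ k ih =>
      intro d hd hk
      have hsum : G.dartSum w d.snd = 0 := by
        rw [dartSum_apply]
        refine sum_eq_zero fun e he => ?_
        by_cases he' : e.IsRootward r
        · have : G.dist r e.fst < k := by
            rw [(mem_filter.1 he).2, ← hk, ← hd]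
            omega
          exact ih _ this e he' rfl
        · exact mem_rootwardSupported.1 hw e he'
      have h := hAw d
      rw [hT.stellated_adjMatrix_mulVec_apply_eq_zero hw hd, stellated_adjMatrix_mulVec_apply,
        Dart.symm_symm, mem_rootwardSupported.1 hw _ hd.not_symm] at h
      simpa [hsum] using h
  funext d
  by_cases hd : d.IsRootward r
  · exact key _ d hd rfl
  · exact mem_rootwardSupported.1 hw d hd

lemma IsTree.eq_zero_of_mem_symmInvariant (hT : G.IsTree) {u : G.Dart → ℝ}
    (hu : u ∈ G.symmInvariant) (hsum : ∀ v, G.dartSum u v = 0) : u = 0 := by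
  obtain ⟨r⟩ := hT.connected.nonempty
  suffices h : ∀ d : G.Dart, d.IsRootward r → u d = 0 by
    funext d
    rcases hT.isRootward_or_isRootward_symm r d with hd | hd
    · exact h d hd
    · rw [← hu d]
      exact h _ hd
  -- A rootward dart `d` with `u d ≠ 0` farthest from `r` is the only nonzero term of `σ_u(d.fst)`:
  -- every other dart leaving `d.fst` is the reverse of a rootward dart farther from `r`.
  by_contra! hne
  obtain ⟨d₀, hd₀⟩ := hne
  obtain ⟨d, hdS, hmax⟩ := exists_max_image
    (univ.filter fun d : G.Dart => d.IsRootward r ∧ u d ≠ 0) (fun d => G.dist r d.fst)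
    ⟨d₀, by simpa using hd₀⟩
  obtain ⟨hd, hud⟩ := (mem_filter.1 hdS).2
  refine hud ?_
  rw [← hsum d.fst, dartSum_apply, sum_eq_single_of_mem d (by simp)]
  intro e he hed
  have hef : e.fst = d.fst := (mem_filter.1 he).2
  have he' : e.symm.IsRootward r := (hT.isRootward_or_isRootward_symm r e).resolve_left
    fun h => hed (hT.eq_of_isRootward h hd hef)
  rw [← hu e]
  by_contra hue
  have := hmax e.symm (by simp [he', hue])
  simp only [Dart.IsRootward, Dart.symm_toProd, Prod.fst_swap, Prod.snd_swap, hef] at he' this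
  omega

lemma IsTree.dotProduct_stellated_adjMatrix_mulVec_pos (hT : G.IsTree) {u : G.Dart → ℝ}
    (hu : u ∈ G.symmInvariant) (hu0 : u ≠ 0) :
    0 < u ⬝ᵥ (stellated G).adjMatrix ℝ *ᵥ u := by
  have hcomp : (fun d => u d.symm) = u := funext hu
  rw [dotProduct_stellated_adjMatrix_mulVec, hcomp, sub_add_cancel]
  refine lt_of_le_of_ne (sum_nonneg fun v _ => sq_nonneg _) fun h => hu0 ?_
  refine hT.eq_zero_of_mem_symmInvariant hu fun v => ?_
  exact pow_eq_zero_iff two_ne_zero |>.1 <|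
    (sum_eq_zero_iff_of_nonneg fun v _ => sq_nonneg _).1 h.symm v (mem_univ v)


lemma stellated_adjMatrix_mulVec_add_symm_eq_zero_of_mem_orthogonal {x : G.Dart → ℝ}
    (hx : x ∈ (toBilin' ((stellated G).adjMatrix ℝ)).orthogonal G.symmInvariant) (d : G.Dart) :
    ((stellated G).adjMatrix ℝ *ᵥ x) d + ((stellated G).adjMatrix ℝ *ᵥ x) d.symm = 0 := by
  have hu : Pi.single d 1 + Pi.single d.symm 1 ∈ G.symmInvariant := fun e => by
    simp only [Pi.add_apply, Pi.single_apply, Dart.symm_involutive.eq_iff, Dart.symm_symm, add_comm]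
  have := LinearMap.BilinForm.mem_orthogonal_iff.1 hx _ hu
  simpa [toBilin'_apply', add_dotProduct] using this

lemma IsTree.dotProduct_stellated_adjMatrix_mulVec_neg (hT : G.IsTree) {x : G.Dart → ℝ}
    (hx : x ∈ (toBilin' ((stellated G).adjMatrix ℝ)).orthogonal G.symmInvariant)
    (hx0 : x ≠ 0) :
    x ⬝ᵥ (stellated G).adjMatrix ℝ *ᵥ x < 0 := by
  obtain ⟨r⟩ := hT.connected.nonempty
  refine dotProduct_mulVec_neg_of_mem_orthogonal (stellated G).isSymm_adjMatrix
    (hT.isCompl_symmInvariant_rootwardSupported r).sup_eq_top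
    (fun u hu => hT.dotProduct_stellated_adjMatrix_mulVec_pos hu)
    (fun w hw => hT.dotProduct_stellated_adjMatrix_mulVec_eq_zero hw) hx fun hw => hx0 ?_
  exact hT.eq_zero_of_mem_rootwardSupported hw
    (stellated_adjMatrix_mulVec_add_symm_eq_zero_of_mem_orthogonal hx)

lemma IsTree.card_edgeFinset_le_finrank_orthogonal (hT : G.IsTree) :
    #G.edgeFinset ≤
      finrank ℝ ((toBilin' ((stellated G).adjMatrix ℝ)).orthogonal G.symmInvariant) := by
  have h := LinearMap.BilinForm.finrank_add_finrank_orthogonal'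
    (B := toBilin' ((stellated G).adjMatrix ℝ)) G.symmInvariant
  rw [hT.finrank_symmInvariant, finrank_fintype_fun_eq_card, dart_card_eq_twice_card_edges] at h
  omega

end StellatedTree

section Spectrum

variable {V : Type*} [Fintype V] [DecidableEq V] {G : SimpleGraph V} [DecidableRel G.Adj]
  (hA : ((stellated G).adjMatrix ℝ).IsHermitian)
include hA

lemma IsTree.card_edgeFinset_le_card_eigenvalues_pos (hT : G.IsTree) :
    #G.edgeFinset ≤ Nat.card {d // 0 < hA.eigenvalues d} := by
  rw [← hT.finrank_symmInvariant]
  exact hA.finrank_le_card_eigenvalues_gt fun u hu hu0 => by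
    simpa using hT.dotProduct_stellated_adjMatrix_mulVec_pos hu hu0

lemma IsTree.card_edgeFinset_le_card_eigenvalues_neg (hT : G.IsTree) :
    #G.edgeFinset ≤ Nat.card {d // hA.eigenvalues d < 0} :=
  hT.card_edgeFinset_le_finrank_orthogonal.trans <|
    hA.finrank_le_card_eigenvalues_lt fun x hx hx0 => by
      simpa using hT.dotProduct_stellated_adjMatrix_mulVec_neg hx hx0

lemma card_eigenvalues_gt_one_le :
    Nat.card {d // 1 < hA.eigenvalues d} ≤ Fintype.card {v // 2 ≤ G.degree v} := by
  let L := LinearMap.funLeft ℝ ℝ (Subtype.val : {v // 2 ≤ G.degree v} → V) ∘ₗ G.dartSum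
  have hker := hA.card_eigenvalues_gt_add_finrank_le (c := 1) (V := LinearMap.ker L) fun x hx => by
    rw [one_mul]
    exact dotProduct_stellated_adjMatrix_mulVec_le x fun v hv =>
      congrFun (LinearMap.mem_ker.1 hx) ⟨v, hv⟩
  have hrank := L.finrank_range_add_finrank_ker
  have hrange := (LinearMap.range L).finrank_le
  rw [finrank_fintype_fun_eq_card] at hrank hrange
  omega

lemma card_eigenvalues_lt_neg_one_add_card_le (hG : ∀ v, 0 < G.degree v) :
    Nat.card {d // hA.eigenvalues d < -1} + Fintype.card V ≤ Fintype.card G.Dart := by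
  let L := LinearMap.funLeft ℝ ℝ (fun d : G.Dart => d.fst)
  have hL : Function.Injective L := LinearMap.funLeft_injective_of_surjective _ _ _ fun v => by
    obtain ⟨w, h⟩ := (G.degree_pos_iff_exists_adj v).1 (hG v)
    exact ⟨⟨(v, w), h⟩, rfl⟩
  have h := hA.card_eigenvalues_lt_add_finrank_le (c := -1) (V := LinearMap.range L) <| by
    rintro _ ⟨g, rfl⟩
    rw [neg_one_mul]
    exact neg_le_dotProduct_stellated_adjMatrix_mulVec_comp_fst g
  rwa [LinearMap.finrank_range_of_inj hL, finrank_fintype_fun_eq_card] at h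

end Spectrum

lemma IsTree.card_two_le_degree_add_two_le {V : Type*} [Fintype V] [Nontrivial V]
    {G : SimpleGraph V} [DecidableRel G.Adj] (hT : G.IsTree) :
    Fintype.card {v // 2 ≤ G.degree v} + 2 ≤ Fintype.card V := by
  obtain ⟨u, w, huw, hu, hw⟩ := hT.exists_ne_and_degree_eq_one
  have hsub : univ.filter (fun v => 2 ≤ G.degree v) ⊆ (univ.erase u).erase w := by
    intro v hv
    simp only [mem_filter, mem_univ, true_and] at hv
    simp only [mem_erase, mem_univ, and_true]
    constructor <;> rintro rfl <;> omega
  have := card_le_card hsub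
  rw [card_erase_of_mem (by simp [huw.symm]), card_erase_of_mem (mem_univ u), card_univ] at this
  rw [Fintype.card_subtype]
  have : 2 ≤ Fintype.card V := Fintype.one_lt_card
  omega

end SimpleGraph

/-- Let `G = st(T)` be the stellated graph of a tree `T` with at least two
vertices.  Then the median eigenvalues of `G` satisfy
`−1 ≤ λ_L(G) < 0 < λ_H(G) ≤ 1`.  Since the spectrum of `G` (which has `2|E(T)| = 2(n−1)`
vertices) splits about the origin, this says: exactly `n−1` eigenvalues are positive and
`n−1` are negative, the smallest positive one is at most `1`, and the largest negative
one is at least `−1`. -/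
theorem stellated_tree_median_eigenvalues
    {n : ℕ} (hn : 2 ≤ n) (T : SimpleGraph (Fin n)) (hT : T.IsTree)
    (A : Matrix T.Dart T.Dart ℝ)
    (hAdef : A = Matrix.of fun d e => if (stellated T).Adj d e then (1 : ℝ) else 0)
    (hA : A.IsHermitian) :
    Nat.card {d // 0 < hA.eigenvalues d} = n - 1 ∧
    Nat.card {d // hA.eigenvalues d < 0} = n - 1 ∧
    (∃ d, 0 < hA.eigenvalues d ∧ hA.eigenvalues d ≤ 1) ∧
    (∃ d, hA.eigenvalues d < 0 ∧ -1 ≤ hA.eigenvalues d) := by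
  obtain rfl : A = (stellated T).adjMatrix ℝ := hAdef
  have : Nontrivial (Fin n) := Fin.nontrivial_iff_two_le.2 hn
  have hedges : #T.edgeFinset + 1 = n := by simpa using hT.card_edgeFinset
  have hdarts : Fintype.card T.Dart = 2 * #T.edgeFinset := T.dart_card_eq_twice_card_edges
  have hpos := hT.card_edgeFinset_le_card_eigenvalues_pos hA
  have hneg := hT.card_edgeFinset_le_card_eigenvalues_neg hA
  have htot := hA.card_eigenvalues_pos_add_card_neg_le
  have hgt := SimpleGraph.card_eigenvalues_gt_one_le hA
  have hint := hT.card_two_le_degree_add_two_le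
  have hlt := SimpleGraph.card_eigenvalues_lt_neg_one_add_card_le hA
    fun v => hT.connected.preconnected.degree_pos_of_nontrivial v
  simp only [Fintype.card_fin] at hint hlt
  refine ⟨by omega, by omega, ?_, ?_⟩
  · obtain ⟨d, hd, hd1⟩ := exists_and_not_of_card_subtype_lt
      (p := fun d => 1 < hA.eigenvalues d) (q := fun d => 0 < hA.eigenvalues d) (by omega)
    exact ⟨d, hd, not_lt.1 hd1⟩
  · obtain ⟨d, hd, hd1⟩ := exists_and_not_of_card_subtype_lt
      (p := fun d => hA.eigenvalues d < -1) (q := fun d => hA.eigenvalues d < 0) (by omega)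
    exact ⟨d, hd, not_lt.1 hd1⟩
end

section
/- Let G be a connected corona graph (the corona of a connected graph H). Then the median adjacency eigenvalues of G satisfy −1 ≤ λ_L(G) < 0 < λ_H(G) ≤ 1. -/
open scoped Classical

/-!
The adjacency matrix of the corona is the block matrix `[[B, 1], [1, 0]]`, `B` the adjacency
matrix of `H`. Diagonalising `B = U D Uᴴ` by a unitary `U` conjugates it to `[[D, 1], [1, 0]]`,
whose characteristic polynomial is `∏ᵢ (X² - dᵢ X - 1)`. So every eigenvalue `dᵢ` of `H`
contributes the two roots of `λ² - dᵢ λ - 1`, one positive and one negative, with product `-1`.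
Since `tr B = 0`, some `dᵢ ≤ 0`, and then the positive root is at most `1`; symmetrically some
`dⱼ ≥ 0` gives a negative root at least `-1`.
-/

open Polynomial Matrix Finset

noncomputable def posRoot (d : ℝ) : ℝ := (d + √(d ^ 2 + 4)) / 2

noncomputable def negRoot (d : ℝ) : ℝ := (d - √(d ^ 2 + 4)) / 2

theorem posRoot_pos (d : ℝ) : 0 < posRoot d := by
  have := Real.lt_sqrt_of_sq_lt (x := -d) (y := d ^ 2 + 4) (by linarith)
  unfold posRoot; linarith

theorem negRoot_neg (d : ℝ) : negRoot d < 0 := by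
  have := Real.lt_sqrt_of_sq_lt (x := d) (y := d ^ 2 + 4) (by linarith)
  unfold negRoot; linarith

theorem posRoot_le_one {d : ℝ} (hd : d ≤ 0) : posRoot d ≤ 1 := by
  have := Real.sqrt_le_iff.mpr (⟨by linarith, by nlinarith⟩ : 0 ≤ 2 - d ∧ d ^ 2 + 4 ≤ (2 - d) ^ 2)
  unfold posRoot; linarith

theorem neg_one_le_negRoot {d : ℝ} (hd : 0 ≤ d) : -1 ≤ negRoot d := by
  have := Real.sqrt_le_iff.mpr (⟨by linarith, by nlinarith⟩ : 0 ≤ 2 + d ∧ d ^ 2 + 4 ≤ (2 + d) ^ 2)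
  unfold negRoot; linarith

theorem X_sub_C_posRoot_mul_X_sub_C_negRoot (d : ℝ) :
    (X - C (posRoot d)) * (X - C (negRoot d)) = X ^ 2 - C d * X - 1 := by
  have hsq : √(d ^ 2 + 4) ^ 2 = d ^ 2 + 4 := Real.sq_sqrt (by positivity)
  have hsum : posRoot d + negRoot d = d := by unfold posRoot negRoot; ring
  have hprod : posRoot d * negRoot d = -1 := by
    unfold posRoot negRoot; linear_combination -hsq / 4
  calc (X - C (posRoot d)) * (X - C (negRoot d))
      = X ^ 2 - C (posRoot d + negRoot d) * X + C (posRoot d * negRoot d) := by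
        rw [C_add, C_mul]; ring
    _ = X ^ 2 - C d * X - 1 := by rw [hsum, hprod, C_neg, C_1]; ring

theorem Nat.card_subtype_comp_eq_countP {ι α : Type*} [Fintype ι] (f : ι → α) (p : α → Prop)
    [DecidablePred p] : Nat.card {x // p (f x)} = (univ.val.map f).countP p := by
  rw [Nat.card_eq_fintype_card, Fintype.card_subtype, Multiset.countP_map, ← filter_val]
  rfl

namespace Matrix

variable {m : Type*} [Fintype m] [DecidableEq m]

theorem det_fromBlocks_of_commute {R : Type*} [CommRing R] {A B C D : Matrix m m R}
    (hCD : Commute C D) (hD : IsRegular D.det) :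
    (fromBlocks A B C D).det = (A * D - B * C).det := by
  have h : fromBlocks A B C D * fromBlocks D 0 (-C) 1 = fromBlocks (A * D - B * C) B 0 D := by
    simp [fromBlocks_multiply, hCD.eq, sub_eq_add_neg]
  apply hD.right
  calc (fromBlocks A B C D).det * D.det
      = (fromBlocks A B C D * fromBlocks D 0 (-C) 1).det := by
        rw [det_mul, det_fromBlocks_zero₁₂, det_one, mul_one]
    _ = (A * D - B * C).det * D.det := by rw [h, det_fromBlocks_zero₂₁]

theorem charpoly_fromBlocks_diagonal_one_one_zero {R : Type*} [CommRing R] (d : m → R) :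
    (fromBlocks (diagonal d) 1 1 0 : Matrix (m ⊕ m) (m ⊕ m) R).charpoly =
      ∏ i, (X ^ 2 - C (d i) * X - 1) := by
  have hchar : charmatrix (fromBlocks (diagonal d) 1 1 0 : Matrix (m ⊕ m) (m ⊕ m) R) =
      fromBlocks (diagonal fun i => X - C (d i)) (-1) (-1) (scalar m X) := by
    ext (i | i) (j | j) <;> by_cases h : i = j <;> simp [h]
  have hX : IsRegular (scalar m (X : R[X])).det := by
    simpa using (monic_X_pow (Fintype.card m)).isRegular
  rw [charpoly, hchar, det_fromBlocks_of_commute ((Commute.one_left _).neg_left) hX, scalar_apply,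
    neg_one_mul, neg_neg, diagonal_mul_diagonal, ← diagonal_one, diagonal_sub, det_diagonal]
  congr! 1 with i
  ring

namespace IsHermitian

theorem charpoly_fromBlocks_one_one_zero {𝕜 : Type*} [RCLike 𝕜] {B : Matrix m m 𝕜}
    (hB : B.IsHermitian) :
    (Matrix.fromBlocks B 1 1 0 : Matrix (m ⊕ m) (m ⊕ m) 𝕜).charpoly =
      ∏ i, (X ^ 2 - C (hB.eigenvalues i : 𝕜) * X - 1) := by
  set D : Matrix m m 𝕜 := diagonal (RCLike.ofReal ∘ hB.eigenvalues)
  set U : Matrix m m 𝕜 := (hB.eigenvectorUnitary : Matrix m m 𝕜)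
  have hB' : B = U * D * Uᴴ := by
    conv_lhs => rw [hB.spectral_theorem, Unitary.conjStarAlgAut_apply, star_eq_conjTranspose]
  have hUU : Uᴴ * U = 1 := Unitary.coe_star_mul_self _
  have hUU' : U * Uᴴ = 1 := Unitary.coe_mul_star_self _
  clear_value U
  set W : Matrix (m ⊕ m) (m ⊕ m) 𝕜 := Matrix.fromBlocks U 0 0 U
  have hWW : Wᴴ * W = 1 := by simp [W, hUU, fromBlocks_conjTranspose, fromBlocks_multiply]
  have hconj : Matrix.fromBlocks B 1 1 0 = W * (Matrix.fromBlocks D 1 1 0 * Wᴴ) := by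
    simp [W, hB', hUU', fromBlocks_conjTranspose, fromBlocks_multiply, Matrix.mul_assoc]
  rw [hconj, charpoly_mul_comm, Matrix.mul_assoc, hWW, Matrix.mul_one,
    charpoly_fromBlocks_diagonal_one_one_zero]
  simp

theorem exists_eigenvalues_nonpos_of_trace_eq_zero [Nonempty m] {𝕜 : Type*} [RCLike 𝕜]
    {B : Matrix m m 𝕜} (hB : B.IsHermitian) (htr : B.trace = 0) : ∃ i, hB.eigenvalues i ≤ 0 := by
  have hsum : ∑ i, hB.eigenvalues i = 0 := by
    exact_mod_cast hB.trace_eq_sum_eigenvalues.symm.trans htr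
  obtain ⟨i, -, hi⟩ :=
    exists_le_of_sum_le (f := hB.eigenvalues) (g := 0) univ_nonempty (by simp [hsum])
  exact ⟨i, hi⟩

theorem exists_eigenvalues_nonneg_of_trace_eq_zero [Nonempty m] {𝕜 : Type*} [RCLike 𝕜]
    {B : Matrix m m 𝕜} (hB : B.IsHermitian) (htr : B.trace = 0) : ∃ i, 0 ≤ hB.eigenvalues i := by
  have hsum : ∑ i, hB.eigenvalues i = 0 := by
    exact_mod_cast hB.trace_eq_sum_eigenvalues.symm.trans htr
  obtain ⟨i, -, hi⟩ :=
    exists_le_of_sum_le (f := 0) (g := hB.eigenvalues) univ_nonempty (by simp [hsum])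
  exact ⟨i, hi⟩

variable {B : Matrix m m ℝ} {A : Matrix (m ⊕ m) (m ⊕ m) ℝ}

theorem map_eigenvalues_fromBlocks_one_one_zero (hB : B.IsHermitian)
    (hAB : A = Matrix.fromBlocks B 1 1 0) (hA : A.IsHermitian) :
    univ.val.map hA.eigenvalues =
      univ.val.map (posRoot ∘ hB.eigenvalues) + univ.val.map (negRoot ∘ hB.eigenvalues) := by
  have hchar : A.charpoly = ∏ i, (X ^ 2 - C (hB.eigenvalues i) * X - 1) := by
    rw [hAB, hB.charpoly_fromBlocks_one_one_zero]; rfl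
  have h := hA.roots_charpoly_eq_eigenvalues
  rw [hchar] at h
  simp only [RCLike.ofReal_real_eq_id, Function.id_comp] at h
  rw [← h, ← roots_multiset_prod_X_sub_C (_ + _)]
  simp [Multiset.map_add, Finset.prod_map_val, ← Finset.prod_mul_distrib,
    X_sub_C_posRoot_mul_X_sub_C_negRoot]

theorem card_eigenvalues_pos_fromBlocks_one_one_zero (hB : B.IsHermitian)
    (hAB : A = Matrix.fromBlocks B 1 1 0) (hA : A.IsHermitian) :
    Nat.card {x // 0 < hA.eigenvalues x} = Fintype.card m := by
  rw [Nat.card_subtype_comp_eq_countP hA.eigenvalues (0 < ·),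
    hB.map_eigenvalues_fromBlocks_one_one_zero hAB hA, Multiset.countP_add,
    Multiset.countP_eq_card.mpr (by simp [posRoot_pos]),
    Multiset.countP_eq_zero.mpr (by simp [(negRoot_neg _).le])]
  simp

theorem card_eigenvalues_neg_fromBlocks_one_one_zero (hB : B.IsHermitian)
    (hAB : A = Matrix.fromBlocks B 1 1 0) (hA : A.IsHermitian) :
    Nat.card {x // hA.eigenvalues x < 0} = Fintype.card m := by
  rw [Nat.card_subtype_comp_eq_countP hA.eigenvalues (· < 0),
    hB.map_eigenvalues_fromBlocks_one_one_zero hAB hA, Multiset.countP_add,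
    Multiset.countP_eq_zero.mpr (by simp [(posRoot_pos _).le]),
    Multiset.countP_eq_card.mpr (by simp [negRoot_neg])]
  simp

theorem exists_eigenvalue_pos_le_one_fromBlocks_one_one_zero (hB : B.IsHermitian)
    (hAB : A = Matrix.fromBlocks B 1 1 0) (hA : A.IsHermitian) {i : m}
    (hi : hB.eigenvalues i ≤ 0) : ∃ x, 0 < hA.eigenvalues x ∧ hA.eigenvalues x ≤ 1 := by
  have hmem : posRoot (hB.eigenvalues i) ∈ univ.val.map hA.eigenvalues := by
    rw [hB.map_eigenvalues_fromBlocks_one_one_zero hAB hA]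
    exact Multiset.mem_add.mpr (.inl (Multiset.mem_map_of_mem _ (mem_univ i)))
  obtain ⟨x, -, hx⟩ := Multiset.mem_map.mp hmem
  exact ⟨x, hx ▸ posRoot_pos _, hx ▸ posRoot_le_one hi⟩

theorem exists_eigenvalue_neg_neg_one_le_fromBlocks_one_one_zero (hB : B.IsHermitian)
    (hAB : A = Matrix.fromBlocks B 1 1 0) (hA : A.IsHermitian) {i : m}
    (hi : 0 ≤ hB.eigenvalues i) : ∃ x, hA.eigenvalues x < 0 ∧ -1 ≤ hA.eigenvalues x := by
  have hmem : negRoot (hB.eigenvalues i) ∈ univ.val.map hA.eigenvalues := by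
    rw [hB.map_eigenvalues_fromBlocks_one_one_zero hAB hA]
    exact Multiset.mem_add.mpr (.inr (Multiset.mem_map_of_mem _ (mem_univ i)))
  obtain ⟨x, -, hx⟩ := Multiset.mem_map.mp hmem
  exact ⟨x, hx ▸ negRoot_neg _, hx ▸ neg_one_le_negRoot hi⟩

end IsHermitian

end Matrix

theorem corona_adjMatrix {α : Type*} [Zero α] [One α] {n : ℕ} (H : SimpleGraph (Fin n)) :
    (corona H).adjMatrix α = fromBlocks (H.adjMatrix α) 1 1 0 := by
  ext (i | i) (j | j)
  · rfl
  -- the two sides' `if`s differ only in their `Decidable` instances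
  · simp only [SimpleGraph.adjMatrix_apply, fromBlocks_apply₁₂, one_apply]
    congr
  · simp only [SimpleGraph.adjMatrix_apply, fromBlocks_apply₂₁, one_apply]
    congr
  · exact if_neg id

theorem corona_median_eigenvalues_general
    {n : ℕ} (hn : 0 < n) (H : SimpleGraph (Fin n))
    (A : Matrix (Fin n ⊕ Fin n) (Fin n ⊕ Fin n) ℝ)
    (hAdef : A = Matrix.of fun x y => if (corona H).Adj x y then (1 : ℝ) else 0)
    (hA : A.IsHermitian) :
    Nat.card {x // 0 < hA.eigenvalues x} = n ∧
    Nat.card {x // hA.eigenvalues x < 0} = n ∧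
    (∃ x, 0 < hA.eigenvalues x ∧ hA.eigenvalues x ≤ 1) ∧
    (∃ x, hA.eigenvalues x < 0 ∧ -1 ≤ hA.eigenvalues x) := by
  have hB := H.isHermitian_adjMatrix ℝ
  have hAB : A = fromBlocks (H.adjMatrix ℝ) 1 1 0 := hAdef.trans (corona_adjMatrix H)
  have : Nonempty (Fin n) := ⟨⟨0, hn⟩⟩
  obtain ⟨i, hi⟩ := hB.exists_eigenvalues_nonpos_of_trace_eq_zero (H.trace_adjMatrix ℝ)
  obtain ⟨j, hj⟩ := hB.exists_eigenvalues_nonneg_of_trace_eq_zero (H.trace_adjMatrix ℝ)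
  refine ⟨?_, ?_, hB.exists_eigenvalue_pos_le_one_fromBlocks_one_one_zero hAB hA hi,
    hB.exists_eigenvalue_neg_neg_one_le_fromBlocks_one_one_zero hAB hA hj⟩
  · simpa using hB.card_eigenvalues_pos_fromBlocks_one_one_zero hAB hA
  · simpa using hB.card_eigenvalues_neg_fromBlocks_one_one_zero hAB hA

/-- For a connected corona graph `G` (the corona of a connected graph `H`
on `n ≥ 1` vertices) the median adjacency eigenvalues satisfy
`−1 ≤ λ_L(G) < 0 < λ_H(G) ≤ 1`.  Since the spectrum of a corona graph splits about the
origin (exactly `n` positive and `n` negative eigenvalues), this is expressed as: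
the smallest positive eigenvalue is at most `1` and the largest negative eigenvalue is
at least `−1`. -/
theorem corona_median_eigenvalues
    {n : ℕ} (hn : 0 < n) (H : SimpleGraph (Fin n)) (hH : H.Connected)
    (A : Matrix (Fin n ⊕ Fin n) (Fin n ⊕ Fin n) ℝ)
    (hAdef : A = Matrix.of fun x y => if (corona H).Adj x y then (1 : ℝ) else 0)
    (hA : A.IsHermitian) :
    Nat.card {x // 0 < hA.eigenvalues x} = n ∧
    Nat.card {x // hA.eigenvalues x < 0} = n ∧
    (∃ x, 0 < hA.eigenvalues x ∧ hA.eigenvalues x ≤ 1) ∧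
    (∃ x, hA.eigenvalues x < 0 ∧ -1 ≤ hA.eigenvalues x) :=
  corona_median_eigenvalues_general hn H A hAdef hA
end
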